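/- arXiv:1806.02128 — 9 statements merged into one kernel-verified Lean document; each statement's English description precedes it below -/
import Mathlib

section
/- Every finite nonabelian group G has a strict n-split decomposition for some positive integer n and some abelian subgroup A of G; that is, there exist an abelian subgroup A ≤ G, a positive integer n, and nonempty subsets B_1, ..., B_n of G with |B_i| ≥ 2 for every i, which together with A partition G, such that no two distinct elements within any single B_i commute. -/
/-!
Take a maximal abelian subgroup `A`, so that `C_G(A) ≤ A`. For `x ∉ A` and `a ∈ A`, the element
`x a` commutes with `x` exactly when `a ∈ D := A ⊓ C_G(x)`, and `D` only depends on the coset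
`x A`. So two elements of a coset `x A` commute iff they lie in the same left coset of `D`, and
`x A` splits into the sets `{s d | s ∈ S}`, `d ∈ D`, where `S ⊆ x A` is a transversal of the left
cosets of `D`. These have `|A : D| ≥ 2` elements because `x ∉ C_G(A)`.
-/

/-- An `n`-split decomposition of a group `G` with respect to an abelian subgroup `A`:
`G` is partitioned as the disjoint union of `A` and nonempty subsets `B 1, ..., B n`,
such that no two distinct elements within any single `B i` commute. -/
def IsSplitDecomp {G : Type*} [Group G] (A : Subgroup G) {n : ℕ} (B : Fin n → Set G) : Prop :=
  IsMulCommutative A ∧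
  (A : Set G) ∪ (⋃ i, B i) = Set.univ ∧
  (∀ i, Disjoint (A : Set G) (B i)) ∧
  (Pairwise fun i j => Disjoint (B i) (B j)) ∧
  (∀ i, (B i).Nonempty) ∧
  ∀ i, ∀ x ∈ B i, ∀ y ∈ B i, x ≠ y → ¬ Commute x y

/-- A strict `n`-split decomposition: an `n`-split decomposition with `|B i| ≥ 2` for all `i`. -/
def IsStrictSplitDecomp {G : Type*} [Group G] (A : Subgroup G) {n : ℕ} (B : Fin n → Set G) : Prop :=
  IsSplitDecomp A B ∧ ∀ i, 2 ≤ (B i).ncard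

open Subgroup

section SplitDecomp

variable {G : Type*} [Group G]

theorem Subgroup.exists_isMulCommutative_centralizer_le [Finite G] :
    ∃ A : Subgroup G, IsMulCommutative A ∧ centralizer (A : Set G) ≤ A := by
  obtain ⟨A, -, hA⟩ :=
    Finite.exists_le_maximal (p := fun H : Subgroup G => IsMulCommutative H) (a := ⊥) inferInstance
  have hA_comm : IsMulCommutative A := hA.prop
  refine ⟨A, hA_comm, fun x hx => ?_⟩
  have hcomm : ∀ y ∈ insert x (A : Set G), ∀ z ∈ insert x (A : Set G), y * z = z * y := by
    rintro y (rfl | hy) z (rfl | hz)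
    · rfl
    · exact (mem_centralizer_iff.1 hx z hz).symm
    · exact mem_centralizer_iff.1 hx y hy
    · exact setLike_mul_comm hy hz
  have hle : A ≤ closure (insert x A) := fun a ha => subset_closure (Set.mem_insert_of_mem _ ha)
  rw [hA.eq_of_le (isMulCommutative_closure hcomm) hle]
  exact subset_closure (Set.mem_insert x _)

theorem exists_isStrictSplitDecomp_of_fibres [Finite G] {β : Type*} (A : Subgroup G)
    [IsMulCommutative A] (f : G → β) (hA : ∃ g, g ∉ A)
    (hf_comm : ∀ g ∉ A, ∀ h, f g = f h → Commute g h → g = h)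
    (hf_two : ∀ g ∉ A, ∃ h ∉ A, h ≠ g ∧ f h = f g) :
    ∃ n, 0 < n ∧ ∃ B : Fin n → Set G, IsStrictSplitDecomp A B := by
  set S := f '' (A : Set G)ᶜ
  have : Nonempty S := hA.elim fun g hg => ⟨⟨f g, g, hg, rfl⟩⟩
  let e := (Finite.equivFin S).symm
  refine ⟨Nat.card S, Nat.card_pos, fun i => {g | g ∉ A ∧ f g = e i},
    ⟨‹_›, ?_, ?_, ?_, ?_, ?_⟩, ?_⟩
  · refine Set.eq_univ_of_forall fun g => ?_
    by_cases hg : g ∈ A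
    · exact Or.inl hg
    · exact Or.inr (Set.mem_iUnion.2 ⟨e.symm ⟨f g, g, hg, rfl⟩, hg, by rw [Equiv.apply_symm_apply]⟩)
  · exact fun i => Set.disjoint_left.2 fun g hg hB => hB.1 hg
  · exact fun i j hij => Set.disjoint_left.2 fun g hi hj =>
      hij (e.injective (Subtype.ext (hi.2.symm.trans hj.2)))
  · intro i
    obtain ⟨g, hg, hfg⟩ := (e i).2
    exact ⟨g, hg, hfg⟩
  · exact fun i g hg h hh hne hc => hne (hf_comm g hg.1 h (hg.2.trans hh.2.symm) hc)
  · intro i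
    obtain ⟨g, hg, hfg⟩ := (e i).2
    obtain ⟨h, hh, hne, hfh⟩ := hf_two g hg
    exact (Set.one_lt_ncard_iff (Set.toFinite _)).2 ⟨h, g, ⟨hh, hfh.trans hfg⟩, ⟨hg, hfg⟩, hne⟩

variable {A : Subgroup G}

theorem inf_centralizer_singleton_eq_of_mk_eq [IsMulCommutative A] {x y : G}
    (h : (x : G ⧸ A) = y) : A ⊓ centralizer {x} = A ⊓ centralizer {y} := by
  obtain ⟨a, ha, rfl⟩ : ∃ a ∈ A, y = x * a := ⟨x⁻¹ * y, QuotientGroup.eq.1 h, by group⟩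
  ext b
  simp only [mem_inf, mem_centralizer_singleton_iff, and_congr_right_iff]
  intro hb
  have hab : Commute b a := setLike_mul_comm hb ha
  exact ⟨fun hbx => Commute.mul_right hbx hab,
    fun hbxa => by simpa using (Commute.mul_right hbxa hab.inv_right).eq⟩

variable (A) in
/-- The second coordinate is the `d` in `x = s d`, with `s` in the transversal
`Set.range Quotient.out` of `D = A ⊓ C_G(x)`; the pieces of the decomposition are the fibres
of this map off `A`. -/
noncomputable def splitLabel (x : G) : (G ⧸ A) × G :=
  (x, ((x : G ⧸ (A ⊓ centralizer {x})).out)⁻¹ * x)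

theorem eq_of_splitLabel_eq_of_commute [IsMulCommutative A] {x y : G}
    (h : splitLabel A x = splitLabel A y) (hc : Commute x y) : x = y := by
  obtain ⟨hA, hD⟩ := Prod.mk.inj h
  rw [← inf_centralizer_singleton_eq_of_mk_eq hA] at hD
  have hxy : (x : G ⧸ (A ⊓ centralizer {x})) = y := by
    refine QuotientGroup.eq.2 ⟨QuotientGroup.eq.1 hA, mem_centralizer_singleton_iff.2 ?_⟩
    exact ((Commute.refl x).inv_left.mul_left hc.symm).eq
  rw [hxy] at hD
  exact mul_left_cancel hD

theorem exists_ne_splitLabel_eq [IsMulCommutative A] (hA : centralizer (A : Set G) ≤ A) {x : G}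
    (hx : x ∉ A) : ∃ y ∉ A, y ≠ x ∧ splitLabel A y = splitLabel A x := by
  set D := A ⊓ centralizer {x}
  obtain ⟨a, ha, haD⟩ : ∃ a ∈ A, a ∉ D := by
    have := mt (@hA x) hx
    simp only [mem_centralizer_iff, not_forall] at this
    obtain ⟨a, ha, hne⟩ := this
    exact ⟨a, ha, fun h => hne (mem_centralizer_singleton_iff.1 h.2)⟩
  set d := ((x : G ⧸ D).out)⁻¹ * x
  have hd : d ∈ D := QuotientGroup.eq.1 (QuotientGroup.out_eq' _)
  set y := ((x * a : G) : G ⧸ D).out * d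
  have hyD : (y : G ⧸ D) = (x * a : G) := by
    rw [QuotientGroup.mk_mul_of_mem _ hd, QuotientGroup.out_eq']
  have hyA : (y : G ⧸ A) = x := by
    have hxa : (x * a)⁻¹ * y ∈ A := (QuotientGroup.eq.1 hyD.symm).1
    refine (QuotientGroup.eq.2 ?_).symm
    simpa [mul_assoc] using A.mul_mem ha hxa
  refine ⟨y, fun hy => hx ?_, fun hyx => haD ?_, ?_⟩
  · simpa using A.mul_mem hy (QuotientGroup.eq.1 hyA)
  · simpa [hyx] using QuotientGroup.eq.1 hyD.symm
  · rw [splitLabel, splitLabel, inf_centralizer_singleton_eq_of_mk_eq hyA, hyA, hyD]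
    exact congrArg (Prod.mk _) (inv_mul_cancel_left _ d)

end SplitDecomp

theorem strict_split_decomposition_exists {G : Type*} [Group G] [Finite G]
    (hG : ¬ ∀ a b : G, Commute a b) :
    ∃ (A : Subgroup G) (n : ℕ), 0 < n ∧ ∃ B : Fin n → Set G, IsStrictSplitDecomp A B := by
  obtain ⟨A, hA_comm, hA⟩ := Subgroup.exists_isMulCommutative_centralizer_le (G := G)
  obtain ⟨g, hg⟩ : ∃ g, g ∉ A := by
    by_contra! h
    exact hG fun a b => setLike_mul_comm (h a) (h b)
  exact ⟨A, exists_isStrictSplitDecomp_of_fibres A (splitLabel A) ⟨g, hg⟩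
    (fun _ _ _ => eq_of_splitLabel_eq_of_commute) (fun _ => exists_ne_splitLabel_eq hA)⟩
end

section
/- Let G be a finite group, A an abelian subgroup of G, and g ∈ G. Set n = |C_A(g)|, where C_A(g) = {a ∈ A : a*g = g*a}. Then there exist subsets B_1, ..., B_n of G such that the right coset A*g is the disjoint union of B_1, ..., B_n, no two distinct elements within any single B_i commute, and |B_i| = |A| / |C_A(g)| for every i = 1, ..., n. -/
/-!
Since `A` is abelian, for `a b ∈ A` the elements `a * g` and `b * g` commute iff `a⁻¹ * b`
commutes with `g`, i.e. iff `a` and `b` lie in the same coset of `C = C_A(g)` in `A`. Identify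
`A` with `(A ⧸ C) × C` and, for each `c ∈ C`, let `B c` be the image in `A * g` of the slice
`(A ⧸ C) × {c}`. The slices partition `A * g`, each has `|A ⧸ C| = |A| / |C|` elements, and two
distinct elements of one slice lie in distinct cosets of `C`, so they do not commute.
-/

open Set

theorem Commute.commute_mul_right_iff {G : Type*} [Group G] {a b : G} (hab : Commute a b)
    (g : G) : Commute (a * g) (b * g) ↔ Commute (a⁻¹ * b) g := by
  set c := a⁻¹ * b
  have hac : Commute a c := (Commute.refl a).inv_right.mul_right hab
  have hbg : b * g = c * (a * g) := by rw [← mul_assoc, hab.inv_mul_cancel]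
  calc Commute (a * g) (b * g) ↔ Commute (a * g) c := by
        rw [hbg]
        exact ⟨fun h => by
          simpa only [mul_inv_cancel_right] using h.mul_right (Commute.refl (a * g)).inv_right,
          fun h => h.mul_right (Commute.refl _)⟩
    _ ↔ Commute g c :=
        ⟨fun h => by simpa only [inv_mul_cancel_left] using hac.inv_left.mul_left h, hac.mul_left⟩
    _ ↔ Commute c g := Commute.symm_iff

section Slices

variable {Q I X : Type*}

theorem Set.iUnion_range_slice (Φ : Q × I → X) : ⋃ i, range (fun q => Φ (q, i)) = range Φ := by
  ext x
  simp [Prod.exists, exists_comm (α := Q)]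

theorem Function.Injective.pairwise_disjoint_range_slice {Φ : Q × I → X} (hΦ : Function.Injective Φ) :
    Pairwise fun i j => Disjoint (range fun q => Φ (q, i)) (range fun q => Φ (q, j)) := by
  rintro i j hij
  rw [disjoint_left]
  rintro _ ⟨q, rfl⟩ ⟨q', h⟩
  exact hij (congrArg Prod.snd (hΦ h)).symm

end Slices

namespace Subgroup

theorem mk_groupEquivQuotientProdSubgroup_symm {α : Type*} [Group α] {s : Subgroup α}
    (p : (α ⧸ s) × s) : ((groupEquivQuotientProdSubgroup.symm p : α) : α ⧸ s) = p.1 :=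
  congrArg Prod.fst (groupEquivQuotientProdSubgroup.apply_symm_apply p)

variable {G : Type*} [Group G] (A : Subgroup G) (g : G)

/-- `C_A(g)`, as a subgroup of `A`. -/
def centralizerIn : Subgroup A := (centralizer {g}).subgroupOf A

noncomputable def cosetParam (p : (A ⧸ A.centralizerIn g) × A.centralizerIn g) : G :=
  (groupEquivQuotientProdSubgroup.symm p : A) * g

variable {A g}

theorem mem_centralizerIn {a : A} : a ∈ A.centralizerIn g ↔ Commute (a : G) g := by
  rw [centralizerIn, mem_subgroupOf, mem_centralizer_singleton_iff, Commute, SemiconjBy, eq_comm]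

theorem card_centralizerIn :
    Nat.card (A.centralizerIn g) = {a : G | a ∈ A ∧ Commute a g}.ncard := by
  rw [← Nat.card_coe_set_eq]
  exact Nat.card_congr
    { toFun := fun a => ⟨a.1.1, a.1.2, mem_centralizerIn.1 a.2⟩
      invFun := fun a => ⟨⟨a.1, a.2.1⟩, mem_centralizerIn.2 a.2.2⟩ }

theorem commute_mul_right_iff_mk_eq [IsMulCommutative A] (x y : A) :
    Commute ((x : G) * g) ((y : G) * g) ↔ (x : A ⧸ A.centralizerIn g) = y := by
  rw [(show Commute (x : G) y from setLike_mul_comm x.2 y.2).commute_mul_right_iff,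
    QuotientGroup.eq, mem_centralizerIn]
  rfl

theorem cosetParam_injective : Function.Injective (cosetParam A g) := fun _ _ h =>
  groupEquivQuotientProdSubgroup.symm.injective (Subtype.ext (mul_right_cancel h))

theorem range_cosetParam : range (cosetParam A g) = {x : G | x * g⁻¹ ∈ A} := by
  ext x
  constructor
  · rintro ⟨p, rfl⟩
    simp [cosetParam]
  · intro hx
    exact ⟨groupEquivQuotientProdSubgroup ⟨x * g⁻¹, hx⟩, by simp [cosetParam]⟩

theorem eq_of_commute_cosetParam [IsMulCommutative A] {q q' : A ⧸ A.centralizerIn g}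
    {c : A.centralizerIn g} (h : Commute (cosetParam A g (q, c)) (cosetParam A g (q', c))) :
    q = q' := by
  simpa only [mk_groupEquivQuotientProdSubgroup_symm] using
    (commute_mul_right_iff_mk_eq _ _).1 h

end Subgroup

open Subgroup in
theorem coset_partition_into_noncommuting_sets {G : Type*} [Group G] [Finite G]
    (A : Subgroup G) (hA : IsMulCommutative A) (g : G) :
    ∃ B : Fin (Set.ncard {a : G | a ∈ A ∧ Commute a g}) → Set G,
      (⋃ i, B i) = {x : G | x * g⁻¹ ∈ A} ∧
      (Pairwise fun i j => Disjoint (B i) (B j)) ∧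
      (∀ i, ∀ x ∈ B i, ∀ y ∈ B i, x ≠ y → ¬ Commute x y) ∧
      ∀ i, (B i).ncard = Nat.card A / Set.ncard {a : G | a ∈ A ∧ Commute a g} := by
  rw [← card_centralizerIn]
  let σ := (Finite.equivFin (A.centralizerIn g)).symm
  refine ⟨fun i => range fun q => cosetParam A g (q, σ i), ?_, ?_, ?_, fun i => ?_⟩
  · rw [σ.surjective.iUnion_comp (fun c => range fun q => cosetParam A g (q, c)),
      iUnion_range_slice, range_cosetParam]
  · exact fun i j hij => cosetParam_injective.pairwise_disjoint_range_slice (σ.injective.ne hij)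
  · rintro i _ ⟨q, rfl⟩ _ ⟨q', rfl⟩ hne hcomm
    exact hne (by rw [eq_of_commute_cosetParam hcomm])
  · rw [card_eq_card_quotient_mul_card_subgroup (A.centralizerIn g),
      Nat.mul_div_cancel _ Nat.card_pos]
    exact ncard_range_of_injective (cosetParam_injective.comp (Prod.mk_left_injective (σ i)))
end

section
/- Suppose a finite group G has an n-split decomposition with respect to an abelian subgroup A. If U is an abelian subgroup of G not contained in A, then |U ∩ A| · (|U : U ∩ A| − 1) ≤ n. In particular, |U ∩ A| ≤ n, |U : U ∩ A| ≤ n + 1, and |U| ≤ 2n. -/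
/-!
Every element of `U \ A` lies in some `B i`, and two of them in the same `B i` would be distinct
commuting elements, so `|U \ A| ≤ n`. Since `U ∩ A` has index `|U : U ∩ A|` in `U`, the set `U \ A`
consists of `|U ∩ A| · (|U : U ∩ A| - 1)` elements, and `|U : U ∩ A| ≥ 2` because `U ≰ A`.
-/

namespace IsSplitDecomp

variable {G : Type*} [Group G] {A : Subgroup G} {n : ℕ} {B : Fin n → Set G}

theorem exists_mem_of_notMem (h : IsSplitDecomp A B) {x : G} (hx : x ∉ A) : ∃ i, x ∈ B i := by
  have hx' : x ∈ (A : Set G) ∪ ⋃ i, B i := h.2.1 ▸ Set.mem_univ x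
  simpa [hx] using hx'

theorem ncard_le_of_pairwise_commute (h : IsSplitDecomp A B) {S : Set G}
    (hSA : Disjoint S A) (hS : S.Pairwise Commute) : S.ncard ≤ n := by
  choose f hf using fun x : S ↦ h.exists_mem_of_notMem (Set.disjoint_left.mp hSA x.2)
  have hf_inj : Function.Injective f := by
    intro x y hxy
    by_contra hne
    have hne' : (x : G) ≠ y := Subtype.coe_ne_coe.mpr hne
    exact h.2.2.2.2.2 (f x) x (hf x) y (hxy ▸ hf y) hne' (hS x.2 y.2 hne')
  simpa [Nat.card_coe_set_eq] using Nat.card_le_card_of_injective f hf_inj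

end IsSplitDecomp

namespace Subgroup

variable {G : Type*} [Group G] (H K : Subgroup G)

theorem card_inf_mul_relIndex : Nat.card ↥(H ⊓ K) * K.relIndex H = Nat.card H := by
  rw [← inf_relIndex_left, ← relIndex_bot_left, ← relIndex_bot_left,
    relIndex_mul_relIndex ⊥ (H ⊓ K) H bot_le inf_le_left]

theorem card_inf_mul_relIndex_sub_one [Finite H] :
    Nat.card ↥(H ⊓ K) * (K.relIndex H - 1) = ((H : Set G) \ K).ncard := by
  have hsplit := Set.ncard_inter_add_ncard_sdiff_eq_ncard (H : Set G) K
  rw [← coe_inf, ← Nat.card_coe_set_eq, ← Nat.card_coe_set_eq] at hsplit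
  rw [Nat.mul_sub_one, card_inf_mul_relIndex]
  exact Nat.sub_eq_of_eq_add' hsplit.symm

theorem two_le_relIndex_of_not_le [Finite H] (hHK : ¬ H ≤ K) : 2 ≤ K.relIndex H := by
  have h₀ : K.relIndex H ≠ 0 := by
    intro h₀
    have := card_inf_mul_relIndex H K
    rw [h₀, mul_zero] at this
    exact Nat.card_pos.ne this
  have h₁ : K.relIndex H ≠ 1 := fun h₁ ↦ hHK (relIndex_eq_one.mp h₁)
  omega

end Subgroup

theorem abelian_subgroup_bounds {G : Type*} [Group G] [Finite G]
    (A : Subgroup G) (n : ℕ) (B : Fin n → Set G) (h : IsSplitDecomp A B)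
    (U : Subgroup G) (hU : IsMulCommutative U) (hUA : ¬ U ≤ A) :
    Nat.card ↥(U ⊓ A) * (A.relIndex U - 1) ≤ n ∧
    Nat.card ↥(U ⊓ A) ≤ n ∧ A.relIndex U ≤ n + 1 ∧ Nat.card U ≤ 2 * n := by
  have hbound : Nat.card ↥(U ⊓ A) * (A.relIndex U - 1) ≤ n := by
    rw [U.card_inf_mul_relIndex_sub_one A]
    refine h.ncard_le_of_pairwise_commute Set.disjoint_sdiff_left fun x hx y hy _ ↦ ?_
    exact setLike_mul_comm hx.1 hy.1
  have hk : 2 ≤ A.relIndex U := U.two_le_relIndex_of_not_le A hUA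
  have hm : 0 < Nat.card ↥(U ⊓ A) := Nat.card_pos
  have hcard : Nat.card U = Nat.card ↥(U ⊓ A) * (A.relIndex U - 1) + Nat.card ↥(U ⊓ A) := by
    rw [← Nat.mul_add_one, Nat.sub_add_cancel (by omega), U.card_inf_mul_relIndex A]
  have hm_le : Nat.card ↥(U ⊓ A) ≤ n :=
    (Nat.le_mul_of_pos_right _ (by omega)).trans hbound
  have hk_le : A.relIndex U - 1 ≤ n := (Nat.le_mul_of_pos_left _ hm).trans hbound
  exact ⟨hbound, hm_le, by omega, by omega⟩
end

section
/- Suppose a finite group G has an n-split decomposition with respect to an abelian subgroup A. (i) If b ∈ G \ A and the cyclic subgroup generated by b intersects A trivially, then (o(b) − 1) · |C_A(b)| ≤ n, where o(b) is the order of b. (ii) For every b ∈ G \ A, one has |C_A(b)| ≤ n and o(b) ≤ 2n. -/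
/-! Pairwise commuting elements outside `A` lie in distinct blocks `B i`, so there are at most
`n` of them. Apply this to `H \ A`, where `H` is the abelian subgroup generated by `b` and
`C_A(b)`: it has `(|H : H ∩ A| - 1) · |H ∩ A|` elements, and the index `|H : H ∩ A|` is at least
`2` because `b ∉ A`, and at least `o(b)` when `⟨b⟩ ∩ A = 1`, since the powers of `b` then lie
in distinct cosets of `A`. -/

namespace Subgroup

variable {G : Type*} [Group G]

theorem card_inf_mul_relIndex_s3 (H A : Subgroup G) :
    Nat.card ↥(H ⊓ A) * A.relIndex H = Nat.card H := by
  rw [← relIndex_bot_left, ← relIndex_bot_left, ← inf_relIndex_left H A]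
  exact relIndex_mul_relIndex _ _ _ bot_le inf_le_left

theorem orderOf_le_relIndex [Finite G] {A H : Subgroup G} {b : G} (hbH : b ∈ H)
    (hb : zpowers b ⊓ A = ⊥) : orderOf b ≤ A.relIndex H := by
  have : A.relIndex (zpowers b) = orderOf b := by
    rw [← inf_relIndex_left, hb, relIndex_bot_left, Nat.card_zpowers]
  exact this ▸ relIndex_le_of_le_right (zpowers_le.mpr hbH) index_ne_zero_of_finite

theorem two_le_relIndex [Finite G] {A H : Subgroup G} (hHA : ¬ H ≤ A) : 2 ≤ A.relIndex H := by
  have := relIndex_eq_one.not.mpr hHA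
  have : A.relIndex H ≠ 0 := index_ne_zero_of_finite
  omega

theorem exists_isMulCommutative_mem_inf_centralizer_le (A : Subgroup G) [IsMulCommutative A]
    (b : G) : ∃ H : Subgroup G, IsMulCommutative H ∧ b ∈ H ∧ A ⊓ centralizer {b} ≤ H ⊓ A := by
  have hb : ∀ x ∈ A ⊓ centralizer {b}, x * b = b * x := fun x hx =>
    mem_centralizer_singleton_iff.mp hx.2
  refine ⟨closure (insert b ↑(A ⊓ centralizer {b})), isMulCommutative_closure ?_,
    subset_closure (Set.mem_insert _ _),
    le_inf (fun x hx => subset_closure (Set.mem_insert_of_mem _ hx)) inf_le_left⟩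
  rintro x (rfl | hx) y (rfl | hy)
  · rfl
  · exact (hb y hy).symm
  · exact hb x hx
  · exact setLike_mul_comm hx.1 hy.1

end Subgroup

namespace IsSplitDecomp

variable {G : Type*} [Group G] {A : Subgroup G} {n : ℕ} {B : Fin n → Set G}

variable [Finite G]

theorem relIndex_sub_one_mul_card_inf_le (h : IsSplitDecomp A B) {H : Subgroup G}
    [IsMulCommutative H] : (A.relIndex H - 1) * Nat.card ↥(H ⊓ A) ≤ n := by
  have hcard : ((H : Set G) \ A).ncard + Nat.card ↥(H ⊓ A) = Nat.card H := by
    rw [← SetLike.coe_sort_coe, ← SetLike.coe_sort_coe, Nat.card_coe_set_eq, Nat.card_coe_set_eq,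
      Subgroup.coe_inf, add_comm, Set.ncard_inter_add_ncard_sdiff_eq_ncard]
  rw [Nat.sub_one_mul, mul_comm, H.card_inf_mul_relIndex_s3 A, ← hcard, Nat.add_sub_cancel]
  refine h.ncard_le_of_pairwise_commute Set.disjoint_sdiff_left fun x hx y hy _ => ?_
  exact setLike_mul_comm hx.1 hy.1

theorem card_inf_le (h : IsSplitDecomp A B) {H : Subgroup G} [IsMulCommutative H]
    (hHA : ¬ H ≤ A) : Nat.card ↥(H ⊓ A) ≤ n := by
  have := Subgroup.two_le_relIndex hHA
  exact (Nat.le_mul_of_pos_left _ (by omega)).trans h.relIndex_sub_one_mul_card_inf_le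

theorem card_le_two_mul (h : IsSplitDecomp A B) {H : Subgroup G} [IsMulCommutative H]
    (hHA : ¬ H ≤ A) : Nat.card H ≤ 2 * n := by
  have := Subgroup.two_le_relIndex hHA
  calc Nat.card H = A.relIndex H * Nat.card ↥(H ⊓ A) := by rw [mul_comm, H.card_inf_mul_relIndex_s3]
    _ ≤ 2 * ((A.relIndex H - 1) * Nat.card ↥(H ⊓ A)) := by rw [← mul_assoc]; gcongr; omega
    _ ≤ 2 * n := by gcongr; exact h.relIndex_sub_one_mul_card_inf_le

end IsSplitDecomp

theorem order_and_centralizer_bounds {G : Type*} [Group G] [Finite G]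
    (A : Subgroup G) (n : ℕ) (B : Fin n → Set G) (h : IsSplitDecomp A B) :
    (∀ b : G, b ∉ A → Subgroup.zpowers b ⊓ A = ⊥ →
      (orderOf b - 1) * Nat.card ↥(A ⊓ Subgroup.centralizer {b}) ≤ n) ∧
    ∀ b : G, b ∉ A →
      Nat.card ↥(A ⊓ Subgroup.centralizer {b}) ≤ n ∧ orderOf b ≤ 2 * n := by
  have := h.1
  refine ⟨fun b _ hb => ?_, fun b hb => ?_⟩ <;>
    obtain ⟨H, hH, hbH, hCH⟩ := Subgroup.exists_isMulCommutative_mem_inf_centralizer_le A b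
  · calc (orderOf b - 1) * Nat.card ↥(A ⊓ Subgroup.centralizer {b})
        ≤ (A.relIndex H - 1) * Nat.card ↥(H ⊓ A) :=
          Nat.mul_le_mul (Nat.sub_le_sub_right (Subgroup.orderOf_le_relIndex hbH hb) 1)
            (Subgroup.card_le_of_le hCH)
      _ ≤ n := h.relIndex_sub_one_mul_card_inf_le
  · have hHA : ¬ H ≤ A := fun hle => hb (hle hbH)
    refine ⟨(Subgroup.card_le_of_le hCH).trans (h.card_inf_le hHA), ?_⟩
    calc orderOf b = Nat.card (Subgroup.zpowers b) := (Nat.card_zpowers b).symm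
      _ ≤ Nat.card H := Subgroup.card_le_of_le (Subgroup.zpowers_le.mpr hbH)
      _ ≤ 2 * n := h.card_le_two_mul hHA
end

section
/- Let G be a finite Frobenius group with abelian Frobenius kernel A, i.e., A is a nontrivial proper normal abelian subgroup of G such that C_G(a) ≤ A for every nonidentity a ∈ A. Then the nontrivial cosets of A form a strict (|G:A|−1)-split decomposition of G with respect to A: no two distinct elements of any coset Ag with g ∉ A commute. If, in addition, there exists an abelian subgroup H of G with G = AH and A ∩ H = 1 (an abelian Frobenius complement), then every n-split decomposition of G with respect to A satisfies n ≥ |G:A| − 1. -/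
/-!
If `x` and `y` lie in the same coset `A g` with `g ∉ A` and commute, then `x` centralizes
`x * y⁻¹ ∈ A`; the Frobenius condition forces `x ∈ A` unless `x = y`, and `x ∈ A` would put
`g` in `A`. So the `|G : A| - 1` nontrivial cosets, each of size `|A| ≥ 2`, form a strict split
decomposition. Conversely, the nontrivial elements of an abelian complement `H` commute pairwise
and avoid `A`, so they lie in pairwise different blocks, and `|H| = |G : A|`.
-/

namespace Subgroup

variable {G : Type*} [Group G] {A : Subgroup G}

theorem not_commute_of_mul_inv_mem_of_mul_inv_mem
    (hfrob : ∀ a : G, a ∈ A → a ≠ 1 → centralizer {a} ≤ A) {g x y : G} (hg : g ∉ A)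
    (hx : x * g⁻¹ ∈ A) (hy : y * g⁻¹ ∈ A) (hxy : x ≠ y) : ¬ Commute x y := by
  intro hc
  have hxy_mem : x * y⁻¹ ∈ A := by simpa [mul_assoc] using A.mul_mem hx (A.inv_mem hy)
  have hx_cent : x ∈ centralizer {x * y⁻¹} :=
    mem_centralizer_singleton_iff.2 ((Commute.refl x).mul_right hc.inv_right).eq
  have hxA : x ∈ A := hfrob _ hxy_mem (mul_inv_eq_one.not.2 hxy) hx_cent
  exact hg (by simpa using A.mul_mem (A.inv_mem hx) hxA)

theorem index_eq_card_of_sup_eq_top_of_inf_eq_bot [A.Normal] {H : Subgroup G}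
    (hsup : A ⊔ H = ⊤) (hinf : A ⊓ H = ⊥) : A.index = Nat.card H :=
  (isComplement'_of_disjoint_and_mul_eq_univ (disjoint_iff.2 hinf)
    (by rw [← normal_mul, hsup, coe_top])).symm.index_eq_card

end Subgroup

namespace QuotientGroup

variable {G : Type*} [Group G] {A : Subgroup G} [A.Normal]

theorem preimage_mk_singleton_mk (g : G) :
    mk ⁻¹' {(g : G ⧸ A)} = {x : G | x * g⁻¹ ∈ A} := by
  ext x
  simp [eq_iff_div_mem, div_eq_mul_inv]

theorem exists_notMem_preimage_mk_singleton_eq {q : G ⧸ A} (hq : q ≠ 1) :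
    ∃ g : G, g ∉ A ∧ mk ⁻¹' {q} = {x : G | x * g⁻¹ ∈ A} := by
  obtain ⟨g, rfl⟩ := mk_surjective q
  exact ⟨g, fun hg => hq ((eq_one_iff g).2 hg), preimage_mk_singleton_mk g⟩

end QuotientGroup

open QuotientGroup

section SplitDecomp

variable {G : Type*} [Group G] {A : Subgroup G}

theorem IsSplitDecomp.ncard_le {n : ℕ} {B : Fin n → Set G} (hB : IsSplitDecomp A B)
    {S : Set G} (hSA : Disjoint S A) (hS : S.Pairwise Commute) : S.ncard ≤ n := by
  obtain ⟨-, hcover, -, -, -, hnc⟩ := hB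
  have hS_cover : ∀ x : S, ∃ i, (x : G) ∈ B i := fun x => by
    have hx : (x : G) ∈ (A : Set G) ∪ ⋃ i, B i := hcover ▸ Set.mem_univ _
    exact Set.mem_iUnion.1 (hx.resolve_left (Set.disjoint_left.1 hSA x.2))
  choose f hf using hS_cover
  have hf_inj : Function.Injective f := fun x y hxy => Subtype.ext <| by_contra fun hne =>
    hnc _ _ (hf x) _ (hxy ▸ hf y) hne (hS x.2 y.2 hne)
  simpa using Nat.card_le_card_of_injective f hf_inj

theorem IsSplitDecomp.card_sub_one_le {n : ℕ} {B : Fin n → Set G} (hB : IsSplitDecomp A B)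
    {H : Subgroup G} (hH : IsMulCommutative H) (hinf : A ⊓ H = ⊥) : Nat.card H - 1 ≤ n := by
  have hdisj : Disjoint ((H : Set G) \ {1}) A := by
    rw [Set.disjoint_left]
    rintro x ⟨hxH, hx1⟩ hxA
    exact hx1 (Subgroup.disjoint_def.1 (disjoint_iff.2 hinf) hxA hxH)
  have hcomm : ((H : Set G) \ {1}).Pairwise Commute := fun x hx y hy _ =>
    congrArg Subtype.val (hH.is_comm.comm ⟨x, hx.1⟩ ⟨y, hy.1⟩)
  have hle := hB.ncard_le hdisj hcomm
  rwa [Set.ncard_sdiff_singleton_of_mem H.one_mem] at hle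

theorem two_le_ncard_preimage_mk [Finite A] (hbot : A ≠ ⊥) (q : G ⧸ A) :
    2 ≤ (mk ⁻¹' {q} : Set G).ncard := by
  rw [← Nat.card_coe_set_eq, card_preimage_mk, Nat.card_coe_set_eq {q}, Set.ncard_singleton,
    mul_one]
  exact (A.one_lt_card_iff_ne_bot).2 hbot

variable [A.Normal]

theorem isSplitDecomp_preimage_mk (hcomm : IsMulCommutative A)
    (hfrob : ∀ a : G, a ∈ A → a ≠ 1 → Subgroup.centralizer {a} ≤ A) {n : ℕ}
    (e : Fin n ≃ ({1}ᶜ : Set (G ⧸ A))) :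
    IsSplitDecomp A fun i => mk ⁻¹' {(e i : G ⧸ A)} := by
  refine ⟨hcomm, ?_, fun i => ?_, fun i j hij => ?_, fun i => ?_, fun i => ?_⟩
  · refine Set.eq_univ_of_forall fun x => ?_
    by_cases hx : (x : G ⧸ A) = 1
    · exact Or.inl ((eq_one_iff x).1 hx)
    · exact Or.inr (Set.mem_iUnion.2 ⟨e.symm ⟨x, hx⟩, by simp⟩)
  · refine Set.disjoint_left.2 fun x hxA hx => (e i).2 ?_
    rw [← Set.mem_singleton_iff.1 hx]
    exact (eq_one_iff x).2 hxA
  · exact (Set.disjoint_singleton.2 fun h => hij (e.injective (Subtype.ext h))).preimage _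
  · exact (Set.singleton_nonempty _).preimage mk_surjective
  · obtain ⟨g, hg, hcoset⟩ := exists_notMem_preimage_mk_singleton_eq (e i).2
    simp only [hcoset]
    exact fun x hx y hy => Subgroup.not_commute_of_mul_inv_mem_of_mul_inv_mem hfrob hg hx hy

end SplitDecomp

theorem frobenius_split_decomposition_general {G : Type*} [Group G] [Finite G]
    (A : Subgroup G) (hbot : A ≠ ⊥) (hnorm : A.Normal)
    (hcomm : IsMulCommutative A)
    (hfrob : ∀ a : G, a ∈ A → a ≠ 1 → Subgroup.centralizer {a} ≤ A) :
    (∀ g : G, g ∉ A → ∀ x ∈ {x : G | x * g⁻¹ ∈ A}, ∀ y ∈ {x : G | x * g⁻¹ ∈ A},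
        x ≠ y → ¬ Commute x y) ∧
    (∃ B : Fin (A.index - 1) → Set G, IsStrictSplitDecomp A B ∧
        ∀ i, ∃ g : G, g ∉ A ∧ B i = {x : G | x * g⁻¹ ∈ A}) ∧
    ((∃ H : Subgroup G, IsMulCommutative H ∧ A ⊔ H = ⊤ ∧ A ⊓ H = ⊥) →
      ∀ (n : ℕ) (B : Fin n → Set G), IsSplitDecomp A B → A.index - 1 ≤ n) := by
  refine ⟨fun g hg x hx y hy =>
    Subgroup.not_commute_of_mul_inv_mem_of_mul_inv_mem hfrob hg hx hy, ?_, ?_⟩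
  · have hcard : Nat.card ({1}ᶜ : Set (G ⧸ A)) = A.index - 1 := by
      rw [Nat.card_coe_set_eq, Set.ncard_compl, Set.ncard_singleton, Subgroup.index]
    let e := (Finite.equivFinOfCardEq hcard).symm
    refine ⟨fun i => mk ⁻¹' {(e i : G ⧸ A)},
      ⟨isSplitDecomp_preimage_mk hcomm hfrob e, fun i => two_le_ncard_preimage_mk hbot _⟩,
      fun i => exists_notMem_preimage_mk_singleton_eq (e i).2⟩
  · rintro ⟨H, hH, hsup, hinf⟩ n B hB
    rw [Subgroup.index_eq_card_of_sup_eq_top_of_inf_eq_bot hsup hinf]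
    exact hB.card_sub_one_le hH hinf

theorem frobenius_split_decomposition {G : Type*} [Group G] [Finite G]
    (A : Subgroup G) (hbot : A ≠ ⊥) (htop : A ≠ ⊤) (hnorm : A.Normal)
    (hcomm : IsMulCommutative A)
    (hfrob : ∀ a : G, a ∈ A → a ≠ 1 → Subgroup.centralizer {a} ≤ A) :
    (∀ g : G, g ∉ A → ∀ x ∈ {x : G | x * g⁻¹ ∈ A}, ∀ y ∈ {x : G | x * g⁻¹ ∈ A},
        x ≠ y → ¬ Commute x y) ∧
    (∃ B : Fin (A.index - 1) → Set G, IsStrictSplitDecomp A B ∧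
        ∀ i, ∃ g : G, g ∉ A ∧ B i = {x : G | x * g⁻¹ ∈ A}) ∧
    ((∃ H : Subgroup G, IsMulCommutative H ∧ A ⊔ H = ⊤ ∧ A ⊓ H = ⊥) →
      ∀ (n : ℕ) (B : Fin n → Set G), IsSplitDecomp A B → A.index - 1 ≤ n) :=
  frobenius_split_decomposition_general A hbot hnorm hcomm hfrob
end

section
/- Let G be a finite nonabelian group and A a subgroup of G. Then G has a 1-split decomposition with respect to A (i.e., G = A ⊔ B where A is abelian and no two distinct elements of the nonempty set B commute) if and only if |A| is odd, |G : A| = 2, A is abelian, and every element of G \ A has order 2 (equivalently, G is a Frobenius group of order 2m with m odd whose Frobenius kernel is the abelian subgroup A of order m). -/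
/-!
In a decomposition `G = A ⊔ B` the set `B` is the complement of `A`, and it is closed under
inversion; since `g` commutes with `g⁻¹`, every `g ∉ A` is an involution. If `x, y ∉ A` had
`x * y ∉ A`, then `x`, `y`, `x * y` would all be involutions, forcing `x` and `y` to commute;
hence `A` has index `2`. For `b ∉ A` and an involution `a ∈ A`, the involutions `b` and `b * a`
commute, so `A` has no involutions and its order is odd by Cauchy's theorem. Conversely, two
distinct commuting involutions outside a subgroup of index `2` would multiply to an involution
of `A`.
-/

theorem commute_of_sq_eq_one {G : Type*} [Group G] {x y : G} (hx : x ^ 2 = 1) (hy : y ^ 2 = 1)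
    (hxy : (x * y) ^ 2 = 1) : Commute x y := by
  rw [sq] at hx hy hxy
  calc x * y = (x * y)⁻¹ := (inv_eq_of_mul_eq_one_right hxy).symm
    _ = y * x := by rw [mul_inv_rev, inv_eq_of_mul_eq_one_right hx, inv_eq_of_mul_eq_one_right hy]

theorem odd_natCard_iff_forall_sq_eq_one {H : Type*} [Group H] [Finite H] :
    Odd (Nat.card H) ↔ ∀ a : H, a ^ 2 = 1 → a = 1 := by
  refine ⟨fun hodd a ha => ?_, fun h => ?_⟩
  · have hdvd : orderOf a ∣ 2 := orderOf_dvd_of_pow_eq_one ha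
    have hodd_a : Odd (orderOf a) := hodd.of_dvd_nat (orderOf_dvd_natCard a)
    rcases (Nat.dvd_prime Nat.prime_two).mp hdvd with h1 | h2
    · exact orderOf_eq_one_iff.mp h1
    · exact absurd (h2 ▸ hodd_a) (by decide)
  · by_contra heven
    rw [Nat.not_odd_iff_even, even_iff_two_dvd] at heven
    obtain ⟨a, ha⟩ := exists_prime_orderOf_dvd_card' 2 heven
    exact (orderOf_eq_prime_iff.mp ha).2 (h a (orderOf_eq_prime_iff.mp ha).1)

namespace Subgroup

variable {G : Type*} [Group G] {A : Subgroup G}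

theorem odd_natCard_iff_forall_sq_eq_one [Finite A] :
    Odd (Nat.card A) ↔ ∀ a ∈ A, a ^ 2 = 1 → a = 1 := by
  rw [_root_.odd_natCard_iff_forall_sq_eq_one, Subtype.forall]
  simp only [← Subtype.val_inj, coe_pow, coe_one]

theorem sq_eq_one_of_notMem (hA : (A : Set G)ᶜ.Pairwise (¬ Commute · ·)) {g : G} (hg : g ∉ A) :
    g ^ 2 = 1 := by
  by_contra h
  refine hA hg (inv_mem_iff.not.mpr hg) (fun he => h ?_) (Commute.refl g).inv_right
  rw [sq, mul_eq_one_iff_eq_inv]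
  exact he

theorem mul_mem_of_notMem (hA : (A : Set G)ᶜ.Pairwise (¬ Commute · ·)) {x y : G} (hx : x ∉ A)
    (hy : y ∉ A) : x * y ∈ A := by
  by_contra hxy
  obtain rfl | hne := eq_or_ne x y
  · exact hxy (by rw [← sq, sq_eq_one_of_notMem hA hx]; exact A.one_mem)
  · exact hA hx hy hne <| commute_of_sq_eq_one (sq_eq_one_of_notMem hA hx)
      (sq_eq_one_of_notMem hA hy) (sq_eq_one_of_notMem hA hxy)

theorem index_eq_two_of_pairwise_not_commute (hA : (A : Set G)ᶜ.Pairwise (¬ Commute · ·))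
    (hne : (A : Set G)ᶜ.Nonempty) : A.index = 2 := by
  obtain ⟨b, hb⟩ := hne
  refine index_eq_two_iff_exists_notMem_and.mpr ⟨b, hb, fun g => ?_⟩
  by_cases hg : g ∈ A
  · exact .inr hg
  · exact .inl (mul_mem_of_notMem hA hg hb)

theorem eq_one_of_sq_eq_one_of_pairwise_not_commute
    (hA : (A : Set G)ᶜ.Pairwise (¬ Commute · ·)) (hne : (A : Set G)ᶜ.Nonempty) {a : G}
    (ha : a ∈ A) (ha2 : a ^ 2 = 1) : a = 1 := by
  obtain ⟨b, hb⟩ := hne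
  by_contra ha1
  have hba : b * a ∉ A := (A.mul_mem_cancel_right ha).not.mpr hb
  have hcomm : Commute b a :=
    commute_of_sq_eq_one (sq_eq_one_of_notMem hA hb) ha2 (sq_eq_one_of_notMem hA hba)
  exact hA hb hba (by simpa using ha1) ((Commute.refl b).mul_right hcomm)

theorem compl_nonempty_and_pairwise_not_commute_iff [Finite G] :
    ((A : Set G)ᶜ.Nonempty ∧ (A : Set G)ᶜ.Pairwise (¬ Commute · ·)) ↔
      Odd (Nat.card A) ∧ A.index = 2 ∧ ∀ g ∉ A, orderOf g = 2 := by
  constructor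
  · rintro ⟨hne, hA⟩
    refine ⟨odd_natCard_iff_forall_sq_eq_one.mpr fun a ha =>
        eq_one_of_sq_eq_one_of_pairwise_not_commute hA hne ha,
      index_eq_two_of_pairwise_not_commute hA hne, fun g hg => ?_⟩
    exact orderOf_eq_prime (sq_eq_one_of_notMem hA hg) fun h => hg (h ▸ A.one_mem)
  · rintro ⟨hodd, hindex, hord⟩
    refine ⟨?_, fun x hx y hy hxy hcomm => hxy ?_⟩
    · obtain ⟨b, hb, -⟩ := index_eq_two_iff_exists_notMem_and.mp hindex
      exact ⟨b, hb⟩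
    have hx2 : x ^ 2 = 1 := (orderOf_eq_prime_iff.mp (hord x hx)).1
    have hy2 : y ^ 2 = 1 := (orderOf_eq_prime_iff.mp (hord y hy)).1
    have hxyA : x * y ∈ A := (mul_mem_iff_of_index_two hindex).mpr (iff_of_false hx hy)
    have hxy1 : x * y = 1 := odd_natCard_iff_forall_sq_eq_one.mp hodd _ hxyA
      (by rw [hcomm.mul_pow, hx2, hy2, one_mul])
    rw [mul_eq_one_iff_eq_inv.mp hxy1, inv_eq_of_mul_eq_one_right (sq y ▸ hy2)]

end Subgroup

theorem exists_isSplitDecomp_fin_one_iff {G : Type*} [Group G] (A : Subgroup G) :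
    (∃ B : Fin 1 → Set G, IsSplitDecomp A B) ↔
      IsMulCommutative A ∧ (A : Set G)ᶜ.Nonempty ∧ (A : Set G)ᶜ.Pairwise (¬ Commute · ·) := by
  constructor
  · rintro ⟨B, hcomm, hunion, hdisj, -, hne, hnc⟩
    have hB : B 0 = (A : Set G)ᶜ := by
      rw [show ⋃ i, B i = B 0 from iSup_unique B] at hunion
      exact (IsCompl.of_eq (hdisj 0).eq_bot hunion).compl_eq.symm
    exact ⟨hcomm, hB ▸ hne 0, hB ▸ hnc 0⟩
  · rintro ⟨hcomm, hne, hA⟩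
    exact ⟨fun _ => (A : Set G)ᶜ, hcomm, by rw [Set.iUnion_const, Set.union_compl_self],
      fun _ => disjoint_compl_right,
      Subsingleton.pairwise, fun _ => hne, fun _ => hA⟩

theorem one_split_decomposition_iff_general {G : Type*} [Group G] [Finite G]
    (A : Subgroup G) :
    (∃ B : Fin 1 → Set G, IsSplitDecomp A B) ↔
      Odd (Nat.card A) ∧ A.index = 2 ∧ IsMulCommutative A ∧
        ∀ g : G, g ∉ A → orderOf g = 2 := by
  rw [exists_isSplitDecomp_fin_one_iff, Subgroup.compl_nonempty_and_pairwise_not_commute_iff]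
  tauto

theorem one_split_decomposition_iff {G : Type*} [Group G] [Finite G]
    (hG : ¬ ∀ a b : G, Commute a b) (A : Subgroup G) :
    (∃ B : Fin 1 → Set G, IsSplitDecomp A B) ↔
      Odd (Nat.card A) ∧ A.index = 2 ∧ IsMulCommutative A ∧
        ∀ g : G, g ∉ A → orderOf g = 2 :=
  one_split_decomposition_iff_general A
end

section
/- Let G be a finite group with a strict 2-split decomposition with respect to an abelian subgroup A. If G is not isomorphic to the symmetric group S_3, G is not isomorphic to the dihedral group of order 10, and it is not the case that G is isomorphic to the dihedral group of order 8 or to the quaternion group of order 8 with |A| = 4, then G has a strict 3-split decomposition with respect to the same subgroup A. -/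
/-! If one block has at least four elements, two of them can be split off as a new block. If
both blocks have exactly three elements and some `x ∈ B 0`, `y ∈ B 1` do not commute, then
`B 0 \ {x}`, `B 1 \ {y}`, `{x, y}` will do. They cannot commute elementwise: `B 1 ∪ {1}` would
lie in the centralizer of two non-commuting elements of `B 0`, a subgroup of index at least 4,
whereas Lagrange gives `|A| ∣ 6`, so `|G| = |A| + 6 ≤ 12`.

In the remaining cases `|B 0| + |B 1| ∈ {4, 5}` is divisible by `|A|`, so `G` is a nonabelian
group of order 6, 8 (with `|A| = 4`) or 10. Such a group has a cyclic subgroup `⟨x⟩` of index 2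
and an element `y ∉ ⟨x⟩` inverting `x` by conjugation, which identifies it with `S₃ ≅ D₃`, with
`D₄` or `Q₈` (according as `y² = 1` or `y² = x²`), or with `D₅`. -/

open Subgroup

section

variable {G : Type*} [Group G]

section Recognition

variable {x y : G} {n : ℕ}

lemma pow_val_natCast_of_orderOf_eq (hx : orderOf x = n) (k : ℕ) :
    x ^ (k : ZMod n).val = x ^ k := by
  rw [pow_eq_pow_iff_modEq, hx, ← ZMod.natCast_eq_natCast_iff]
  simp

variable [NeZero n]

lemma pow_val_add_of_orderOf_eq (hx : orderOf x = n) (i j : ZMod n) :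
    x ^ (i + j).val = x ^ i.val * x ^ j.val := by
  rw [← pow_add, ← pow_val_natCast_of_orderOf_eq hx (i.val + j.val)]
  simp

lemma pow_val_eq_one_iff_of_orderOf_eq (hx : orderOf x = n) (i : ZMod n) :
    x ^ i.val = 1 ↔ i = 0 := by
  rw [← pow_zero x, pow_eq_pow_iff_modEq, hx, ← ZMod.natCast_eq_natCast_iff]
  simp

lemma pow_val_neg_of_orderOf_eq (hx : orderOf x = n) (i : ZMod n) :
    x ^ (-i).val = (x ^ i.val)⁻¹ := by
  rw [eq_inv_iff_mul_eq_one, ← pow_val_add_of_orderOf_eq hx, neg_add_cancel, ZMod.val_zero,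
    pow_zero]

lemma pow_val_mul_of_conj_eq_inv (hx : orderOf x = n) (hconj : y * x * y⁻¹ = x⁻¹)
    (i : ZMod n) :
    x ^ i.val * y = y * x ^ (-i).val :=
  calc x ^ i.val * y = y * x ^ (-i).val * y⁻¹ * y := by
        rw [← conj_pow, hconj, inv_pow, ← pow_val_neg_of_orderOf_eq hx, neg_neg]
    _ = y * x ^ (-i).val := by group

lemma mul_pow_ne_one_of_notMem_zpowers (hy : y ∉ zpowers x) (k : ℕ) : y * x ^ k ≠ 1 :=
  fun h => hy (eq_inv_of_mul_eq_one_left h ▸ inv_mem (pow_mem (mem_zpowers x) k))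

variable [Finite G]

lemma nonempty_mulEquiv_dihedralGroup (hx : orderOf x = n) (hcard : Nat.card G = 2 * n)
    (hy : y ∉ zpowers x) (hy2 : y * y = 1) (hconj : y * x * y⁻¹ = x⁻¹) :
    Nonempty (G ≃* DihedralGroup n) := by
  have hadd := pow_val_add_of_orderOf_eq hx
  have hswap := pow_val_mul_of_conj_eq_inv hx hconj
  let f : DihedralGroup n → G
    | .r i => x ^ i.val
    | .sr i => y * x ^ i.val
  have hf : ∀ a b, f (a * b) = f a * f b := by
    rintro (i | i) (j | j)
    · exact hadd i j
    · simp only [f, DihedralGroup.r_mul_sr]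
      rw [← mul_assoc, hswap, mul_assoc, ← hadd, neg_add_eq_sub]
    · simp only [f, DihedralGroup.sr_mul_r]
      rw [mul_assoc, ← hadd]
    · simp only [f, DihedralGroup.sr_mul_sr]
      rw [mul_assoc, ← mul_assoc _ y, hswap, ← mul_assoc, ← mul_assoc, hy2, one_mul, ← hadd,
        neg_add_eq_sub]
  let F := MonoidHom.mk' f hf
  have hinj : Function.Injective F := by
    rw [injective_iff_map_eq_one]
    rintro (i | i) h
    · rw [DihedralGroup.one_def, (pow_val_eq_one_iff_of_orderOf_eq hx i).mp h]
    · exact absurd h (mul_pow_ne_one_of_notMem_zpowers hy _)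
  refine ⟨(MulEquiv.ofBijective F ?_).symm⟩
  rw [Nat.bijective_iff_injective_and_card, DihedralGroup.nat_card, hcard]
  exact ⟨hinj, rfl⟩

lemma nonempty_mulEquiv_quaternionGroup (hx : orderOf x = 2 * n) (hcard : Nat.card G = 4 * n)
    (hy : y ∉ zpowers x) (hy2 : y * y = x ^ n) (hconj : y * x * y⁻¹ = x⁻¹) :
    Nonempty (G ≃* QuaternionGroup n) := by
  have hadd := pow_val_add_of_orderOf_eq hx
  have hswap := pow_val_mul_of_conj_eq_inv hx hconj
  let f : QuaternionGroup n → G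
    | .a i => x ^ i.val
    | .xa i => y * x ^ i.val
  have hf : ∀ a b, f (a * b) = f a * f b := by
    rintro (i | i) (j | j)
    · exact hadd i j
    · simp only [f, QuaternionGroup.a_mul_xa]
      rw [← mul_assoc, hswap, mul_assoc, ← hadd, neg_add_eq_sub]
    · simp only [f, QuaternionGroup.xa_mul_a]
      rw [mul_assoc, ← hadd]
    · simp only [f, QuaternionGroup.xa_mul_xa]
      rw [mul_assoc, ← mul_assoc _ y, hswap, ← mul_assoc, ← mul_assoc, hy2,
        ← pow_val_natCast_of_orderOf_eq hx n, mul_assoc, ← hadd, ← hadd, add_sub_assoc,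
        neg_add_eq_sub]
  let F := MonoidHom.mk' f hf
  have hinj : Function.Injective F := by
    rw [injective_iff_map_eq_one]
    rintro (i | i) h
    · rw [QuaternionGroup.one_def, (pow_val_eq_one_iff_of_orderOf_eq hx i).mp h]
    · exact absurd h (mul_pow_ne_one_of_notMem_zpowers hy _)
  refine ⟨(MulEquiv.ofBijective F ?_).symm⟩
  rw [Nat.bijective_iff_injective_and_card, Nat.card_eq_fintype_card, QuaternionGroup.card, hcard]
  exact ⟨hinj, rfl⟩

end Recognition

section IndexTwo

variable {x y : G}

lemma zpow_eq_zpow_iff_intCast_eq (k l : ℤ) :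
    x ^ k = x ^ l ↔ (k : ZMod (orderOf x)) = l := by
  rw [zpow_eq_zpow_iff_modEq, ZMod.intCast_eq_intCast_iff]

lemma isMulCommutative_of_commute_of_index_eq_two (hidx : (zpowers x).index = 2)
    (hy : y ∉ zpowers x) (hxy : Commute x y) : IsMulCommutative G := by
  have htop : closure {x, y} = ⊤ := by
    have hle : zpowers x ≤ closure {x, y} := zpowers_le.2 (subset_closure (by simp))
    have hrel : (zpowers x).relIndex (closure {x, y}) ≠ 1 := by
      rw [Ne, relIndex_eq_one]
      exact fun h => hy (h (subset_closure (by simp)))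
    have h2 := relIndex_mul_index hle
    rw [hidx] at h2
    rcases Nat.prime_two.eq_one_or_self_of_dvd _ (Dvd.intro _ h2) with h | h
    · exact absurd h hrel
    · rw [h] at h2
      rw [← index_eq_one]
      omega
  have hcomm : ∀ a ∈ ({x, y} : Set G), ∀ b ∈ ({x, y} : Set G), a * b = b * a := by
    rintro a (rfl | rfl) b (rfl | rfl)
    exacts [rfl, hxy, hxy.symm, rfl]
  have := isMulCommutative_closure hcomm
  exact isMulCommutative_iff.2 fun a b =>
    setLike_mul_comm (htop ▸ mem_top a) (htop ▸ mem_top b)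

lemma conj_eq_inv_of_index_eq_two (hidx : (zpowers x).index = 2) (hy : y ∉ zpowers x)
    (hG : ¬ IsMulCommutative G)
    (hsq : ∀ m : ZMod (orderOf x), m * m = 1 → m = 1 ∨ m = -1) :
    y * x * y⁻¹ = x⁻¹ := by
  obtain ⟨k, hk⟩ := mem_zpowers_iff.mp
    ((normal_of_index_eq_two hidx).conj_mem x (mem_zpowers x) y)
  have hyy : Commute (y * y) x :=
    setLike_mul_comm (mul_self_mem_of_index_two hidx y) (mem_zpowers x)
  have hkk : x ^ (k * k) = x ^ (1 : ℤ) :=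
    calc x ^ (k * k) = y * (y * x * y⁻¹) * y⁻¹ := by rw [zpow_mul, hk, conj_zpow, hk]
      _ = (y * y) * x * (y * y)⁻¹ := by group
      _ = x ^ (1 : ℤ) := by rw [hyy.eq]; group
  rw [zpow_eq_zpow_iff_intCast_eq, Int.cast_mul, Int.cast_one] at hkk
  rcases hsq _ hkk with h | h
  · refine absurd (isMulCommutative_of_commute_of_index_eq_two hidx hy ?_) hG
    rw [← Int.cast_one, ← zpow_eq_zpow_iff_intCast_eq, hk, zpow_one] at h
    exact (mul_inv_eq_iff_eq_mul.mp h).symm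
  · rw [← Int.cast_one, ← Int.cast_neg, ← zpow_eq_zpow_iff_intCast_eq, hk] at h
    rw [h, zpow_neg_one]

lemma mul_self_eq_one_or_sq_of_conj_eq_inv (hx : orderOf x = 4) (hconj : y * x * y⁻¹ = x⁻¹)
    (hyy : y * y ∈ zpowers x) : y * y = 1 ∨ y * y = x ^ 2 := by
  obtain ⟨k, hk⟩ := mem_zpowers_iff.mp hyy
  have hkk : x ^ (k + k) = x ^ (0 : ℤ) := by
    have hinv : y * x ^ k * y⁻¹ = (x ^ k)⁻¹ := by rw [← conj_zpow, hconj, inv_zpow]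
    rw [hk, show y * (y * y) * y⁻¹ = y * y by group] at hinv
    rw [zpow_add, zpow_zero, hk]
    nth_rw 2 [hinv]
    exact mul_inv_cancel _
  rw [zpow_eq_zpow_iff_intCast_eq, hx, Int.cast_add, Int.cast_zero] at hkk
  have hk02 : ∀ m : ZMod 4, m + m = 0 → m = 0 ∨ m = 2 := by decide
  rcases hk02 _ hkk with h | h
  · rw [← Int.cast_zero, ← hx, ← zpow_eq_zpow_iff_intCast_eq, hk, zpow_zero] at h
    exact .inl h
  · rw [show (2 : ZMod 4) = ((2 : ℤ) : ZMod 4) from rfl, ← hx, ← zpow_eq_zpow_iff_intCast_eq,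
      hk] at h
    exact .inr (by rw [h, zpow_ofNat])

variable [Finite G]

lemma index_zpowers_eq_two (hcard : Nat.card G = 2 * orderOf x) : (zpowers x).index = 2 := by
  have h := card_mul_index (zpowers x)
  rw [Nat.card_zpowers, hcard, mul_comm 2] at h
  exact Nat.eq_of_mul_eq_mul_left (orderOf_pos x) h

theorem nonempty_mulEquiv_dihedralGroup_of_card_eq_two_mul_prime {p : ℕ} [Fact p.Prime]
    (hp2 : p ≠ 2) (hcard : Nat.card G = 2 * p) (hG : ¬ IsMulCommutative G) :
    Nonempty (G ≃* DihedralGroup p) := by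
  obtain ⟨x, hx⟩ := exists_prime_orderOf_dvd_card' p (hcard ▸ dvd_mul_left p 2)
  obtain ⟨y, hy⟩ := exists_prime_orderOf_dvd_card' 2 (hcard ▸ dvd_mul_right 2 p)
  have hidx : (zpowers x).index = 2 := index_zpowers_eq_two (hx ▸ hcard)
  have hyx : y ∉ zpowers x := fun h => by
    have h2p := orderOf_dvd_of_mem_zpowers h
    rw [hx, hy, Nat.prime_dvd_prime_iff_eq Nat.prime_two Fact.out] at h2p
    exact hp2 h2p.symm
  have hsq : ∀ m : ZMod (orderOf x), m * m = 1 → m = 1 ∨ m = -1 := by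
    rw [hx]; exact fun m => mul_self_eq_one_iff.mp
  refine nonempty_mulEquiv_dihedralGroup hx hcard hyx ?_
    (conj_eq_inv_of_index_eq_two hidx hyx hG hsq)
  rw [← sq, ← hy, pow_orderOf_eq_one]

lemma exists_orderOf_eq_four_of_card_eq_eight (hcard : Nat.card G = 8)
    (hG : ¬ IsMulCommutative G) : ∃ x : G, orderOf x = 4 := by
  by_contra! h
  refine hG (isMulCommutative_iff.2 (Commute.of_orderOf_dvd_two fun g => ?_))
  obtain ⟨k, hk, hg⟩ := (Nat.dvd_prime_pow Nat.prime_two).mp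
    (show orderOf g ∣ 2 ^ 3 by simpa [hcard] using orderOf_dvd_natCard g)
  interval_cases k
  · simp [hg]
  · simp [hg]
  · exact absurd hg (h g)
  · exact absurd (isCyclic_of_orderOf_eq_card g (by rw [hg, hcard]; rfl)).isMulCommutative hG

theorem nonempty_mulEquiv_of_card_eq_eight (hcard : Nat.card G = 8)
    (hG : ¬ IsMulCommutative G) :
    Nonempty (G ≃* DihedralGroup 4) ∨ Nonempty (G ≃* QuaternionGroup 2) := by
  obtain ⟨x, hx⟩ := exists_orderOf_eq_four_of_card_eq_eight hcard hG
  have hidx : (zpowers x).index = 2 := index_zpowers_eq_two (by rw [hcard, hx])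
  obtain ⟨y, hy⟩ : ∃ y, y ∉ zpowers x := by
    by_contra! h
    rw [(eq_top_iff' _).mpr h, index_top] at hidx
    exact absurd hidx (by decide)
  have hconj := conj_eq_inv_of_index_eq_two hidx hy hG (by rw [hx]; decide)
  rcases mul_self_eq_one_or_sq_of_conj_eq_inv hx hconj (mul_self_mem_of_index_two hidx y)
    with hyy | hyy
  · exact .inl (nonempty_mulEquiv_dihedralGroup hx hcard hy hyy hconj)
  · exact .inr (nonempty_mulEquiv_quaternionGroup hx hcard hy hyy hconj)

theorem nonempty_mulEquiv_perm_fin_three (hcard : Nat.card G = 6) (hG : ¬ IsMulCommutative G) :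
    Nonempty (G ≃* Equiv.Perm (Fin 3)) := by
  have : Fact (Nat.Prime 3) := ⟨Nat.prime_three⟩
  have hS3 : ¬ IsMulCommutative (Equiv.Perm (Fin 3)) := by
    rw [Equiv.Perm.isMulCommutative_iff_card_le_two]; simp
  obtain ⟨e⟩ := nonempty_mulEquiv_dihedralGroup_of_card_eq_two_mul_prime (p := 3) (by norm_num)
    hcard hG
  obtain ⟨f⟩ := nonempty_mulEquiv_dihedralGroup_of_card_eq_two_mul_prime (p := 3) (by norm_num)
    (by rw [Nat.card_perm, Nat.card_fin]; rfl) hS3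
  exact ⟨e.trans f.symm⟩

lemma two_mul_card_le_card_of_lt {H K : Subgroup G} (hHK : H < K) :
    2 * Nat.card H ≤ Nat.card K := by
  obtain ⟨k, hk⟩ := card_dvd_of_le hHK.le
  have hk2 : 2 ≤ k := by
    by_contra! hk2
    interval_cases k
    · exact Nat.card_pos.ne' (hk.trans (mul_zero _))
    · exact hHK.ne (eq_of_le_of_card_ge hHK.le (by rw [hk, mul_one]))
  rw [hk, mul_comm]
  exact Nat.mul_le_mul_left _ hk2

lemma four_mul_card_centralizer_pair_le {b c : G} (hbc : ¬ Commute b c) :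
    4 * Nat.card (centralizer {b, c}) ≤ Nat.card G := by
  have hb : centralizer {b, c} < centralizer {b} := by
    refine SetLike.lt_iff_le_and_exists.mpr
      ⟨centralizer_le (by simp), b, mem_centralizer_singleton_iff.mpr rfl, fun h => ?_⟩
    exact hbc (mem_centralizer_iff.mp h c (by simp)).symm
  have hc : centralizer {b} < ⊤ := by
    refine SetLike.lt_iff_le_and_exists.mpr ⟨le_top, c, mem_top c, fun h => ?_⟩
    exact hbc (mem_centralizer_singleton_iff.mp h).symm
  have := two_mul_card_le_card_of_lt hb
  have := two_mul_card_le_card_of_lt hc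
  rw [card_top] at this
  omega

theorem exceptional_of_card_eq_card_add (A : Subgroup G) (hG : ¬ IsMulCommutative G) {m : ℕ}
    (hcard : Nat.card G = Nat.card A + m) (hm4 : 4 ≤ m) (hm5 : m ≤ 5) :
    Nonempty (G ≃* Equiv.Perm (Fin 3)) ∨ Nonempty (G ≃* DihedralGroup 5) ∨
      ((Nonempty (G ≃* DihedralGroup 4) ∨ Nonempty (G ≃* QuaternionGroup 2)) ∧
        Nat.card A = 4) := by
  have hdvd : Nat.card A ∣ m :=
    (Nat.dvd_add_right dvd_rfl).mp (hcard ▸ A.card_subgroup_dvd_card)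
  have hA : 0 < Nat.card A := Nat.card_pos
  have hcases : Nat.card G = 5 ∨ Nat.card G = 6 ∨ (Nat.card G = 8 ∧ Nat.card A = 4) ∨
      Nat.card G = 10 := by
    have := Nat.le_of_dvd (by omega) hdvd
    interval_cases m <;> interval_cases Nat.card A <;> omega
  have : Fact (Nat.Prime 5) := ⟨by norm_num⟩
  rcases hcases with h5 | h6 | ⟨h8, hA4⟩ | h10
  · exact absurd (isCyclic_of_prime_card h5).isMulCommutative hG
  · exact .inl (nonempty_mulEquiv_perm_fin_three h6 hG)
  · exact .inr (.inr ⟨nonempty_mulEquiv_of_card_eq_eight h8 hG, hA4⟩)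
  · exact .inr (.inl
      (nonempty_mulEquiv_dihedralGroup_of_card_eq_two_mul_prime (by norm_num) h10 hG))

end IndexTwo

section SplitDecomp

variable {A : Subgroup G} {n : ℕ} {B : Fin n → Set G}

lemma two_le_ncard_sdiff_pair_of_notMem {α : Type*} {s : Set α} {x y : α} (hs : 3 ≤ s.ncard)
    (hy : y ∉ s) : 2 ≤ (s \ {x, y}).ncard :=
  calc 2 ≤ s.ncard - 1 := by omega
    _ ≤ (s \ {x}).ncard := Set.pred_ncard_le_ncard_sdiff_singleton s x
    _ ≤ (s \ {x, y}).ncard :=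
      Set.ncard_le_ncard
        (fun g ⟨hg, hgx⟩ => ⟨hg, by rintro (rfl | rfl); exacts [hgx rfl, hy hg]⟩)
        ((Set.finite_of_ncard_pos (by omega)).subset Set.sdiff_subset)

theorem isStrictSplitDecomp_iff :
    IsStrictSplitDecomp A B ↔ IsMulCommutative A ∧ ⋃ i, B i = (A : Set G)ᶜ ∧
      (Pairwise fun i j => Disjoint (B i) (B j)) ∧
      ∀ i, (B i).Pairwise (¬ Commute · ·) ∧ 2 ≤ (B i).ncard := by
  rw [eq_compl_iff_isCompl, isCompl_comm, isCompl_iff, Set.disjoint_iUnion_right, codisjoint_iff]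
  constructor
  · rintro ⟨⟨hA, hcov, hdA, hdisj, -, hanti⟩, hcard⟩
    exact ⟨hA, ⟨hdA, hcov⟩, hdisj, fun i => ⟨hanti i, hcard i⟩⟩
  · rintro ⟨hA, ⟨hdA, hcov⟩, hdisj, hB⟩
    refine ⟨⟨hA, hcov, hdA, hdisj, fun i => ?_, fun i => (hB i).1⟩, fun i => (hB i).2⟩
    exact Set.nonempty_of_ncard_ne_zero (two_pos.trans_le (hB i).2).ne'

namespace IsStrictSplitDecomp

theorem card_eq [Finite G] (h : IsStrictSplitDecomp A B) :
    Nat.card G = Nat.card A + ∑ i, (B i).ncard := by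
  obtain ⟨-, hcov, hdisj, -⟩ := isStrictSplitDecomp_iff.mp h
  rw [← Set.ncard_add_ncard_compl (A : Set G), ← hcov,
    Set.ncard_iUnion_of_finite (fun i => Set.toFinite _) hdisj, finsum_eq_sum_of_fintype]
  rfl

theorem cons_pair (h : IsStrictSplitDecomp A B) {x y : G} (hxA : x ∉ A) (hyA : y ∉ A)
    (hxy : ¬ Commute x y) (hB : ∀ i, 2 ≤ (B i \ {x, y}).ncard) :
    IsStrictSplitDecomp A (Fin.cons {x, y} fun i => B i \ {x, y} : Fin (n + 1) → Set G) := by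
  obtain ⟨hA, hcov, hdisj, hanti⟩ := isStrictSplitDecomp_iff.mp h
  have hne : x ≠ y := by rintro rfl; exact hxy (Commute.refl x)
  refine isStrictSplitDecomp_iff.mpr ⟨hA, ?_, ?_, Fin.cases ?_ fun i => ?_⟩
  · rw [← Set.union_sdiff_cancel (s := {x, y}) (t := (A : Set G)ᶜ), ← hcov, Set.iUnion_sdiff]
    · ext g; simp
    · rintro g (rfl | rfl) <;> assumption
  · intro i j hij
    induction i using Fin.cases <;> induction j using Fin.cases
    · exact absurd rfl hij
    · exact Set.disjoint_sdiff_right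
    · exact Set.disjoint_sdiff_left
    · exact (hdisj (fun h => hij (congrArg Fin.succ h))).mono Set.sdiff_subset Set.sdiff_subset
  · refine ⟨Set.pairwise_pair.mpr fun _ => ⟨hxy, fun h => hxy h.symm⟩, ?_⟩
    simp [Set.ncard_pair hne]
  · exact ⟨(hanti i).1.mono Set.sdiff_subset, hB i⟩

theorem exists_not_commute (h : IsStrictSplitDecomp A B) (i : Fin n) :
    ∃ u ∈ B i, ∃ v ∈ B i, ¬ Commute u v := by
  obtain ⟨-, -, -, hB⟩ := isStrictSplitDecomp_iff.mp h
  have hfin := Set.finite_of_ncard_pos (two_pos.trans_le (hB i).2)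
  obtain ⟨u, hu, v, hv, hne⟩ := (Set.one_lt_ncard hfin).mp (hB i).2
  exact ⟨u, hu, v, hv, (hB i).1 hu hv hne⟩

theorem not_isMulCommutative (h : IsStrictSplitDecomp A B) (i : Fin n) :
    ¬ IsMulCommutative G := fun _ => by
  obtain ⟨u, -, v, -, huv⟩ := h.exists_not_commute i
  exact huv (mul_comm' u v)

theorem notMem_of_mem (h : IsStrictSplitDecomp A B) {i : Fin n} {x : G} (hx : x ∈ B i) :
    x ∉ A := by
  rw [← SetLike.mem_coe, ← Set.mem_compl_iff, ← (isStrictSplitDecomp_iff.mp h).2.1]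
  exact Set.mem_iUnion_of_mem i hx

theorem exists_succ_of_four_le_ncard (h : IsStrictSplitDecomp A B) {i : Fin n}
    (hi : 4 ≤ (B i).ncard) : ∃ B' : Fin (n + 1) → Set G, IsStrictSplitDecomp A B' := by
  obtain ⟨-, -, hdisj, hB⟩ := isStrictSplitDecomp_iff.mp h
  obtain ⟨x, hx, y, hy, hxy⟩ := h.exists_not_commute i
  have hsub : ({x, y} : Set G) ⊆ B i := Set.pair_subset hx hy
  refine ⟨_, h.cons_pair (h.notMem_of_mem hx) (h.notMem_of_mem hy) hxy fun k => ?_⟩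
  rcases eq_or_ne k i with rfl | hki
  · rw [Set.ncard_sdiff hsub, Set.ncard_pair (by rintro rfl; exact hxy (Commute.refl x))]
    omega
  · rw [sdiff_eq_left.mpr ((hdisj hki).mono_right hsub)]
    exact (hB k).2

theorem exists_succ_of_not_commute (h : IsStrictSplitDecomp A B) {i j : Fin n} (hij : i ≠ j)
    (hi : 3 ≤ (B i).ncard) (hj : 3 ≤ (B j).ncard) {x y : G} (hx : x ∈ B i) (hy : y ∈ B j)
    (hxy : ¬ Commute x y) : ∃ B' : Fin (n + 1) → Set G, IsStrictSplitDecomp A B' := by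
  obtain ⟨-, -, hdisj, hB⟩ := isStrictSplitDecomp_iff.mp h
  refine ⟨_, h.cons_pair (h.notMem_of_mem hx) (h.notMem_of_mem hy) hxy fun k => ?_⟩
  by_cases hki : k = i
  · subst hki
    exact two_le_ncard_sdiff_pair_of_notMem hi (Set.disjoint_right.mp (hdisj hij) hy)
  by_cases hkj : k = j
  · subst hkj
    rw [Set.pair_comm]
    exact two_le_ncard_sdiff_pair_of_notMem hj (Set.disjoint_left.mp (hdisj hij) hx)
  rw [sdiff_eq_left.mpr (Set.disjoint_right.mpr ?_)]
  · exact (hB k).2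
  rintro g (rfl | rfl)
  exacts [fun hk => Set.disjoint_left.mp (hdisj hki) hk hx,
    fun hk => Set.disjoint_left.mp (hdisj hkj) hk hy]

theorem exists_not_commute_of_card_lt [Finite G] (h : IsStrictSplitDecomp A B) (i j : Fin n)
    (hG : Nat.card G < 4 * ((B j).ncard + 1)) : ∃ x ∈ B i, ∃ y ∈ B j, ¬ Commute x y := by
  by_contra! hcomm
  obtain ⟨u, hu, v, hv, huv⟩ := h.exists_not_commute i
  have hsub : insert 1 (B j) ⊆ (centralizer {u, v} : Set G) := by
    refine Set.insert_subset (one_mem _) fun g hg => mem_centralizer_iff.mpr ?_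
    rintro w (rfl | rfl)
    exacts [hcomm w hu g hg, hcomm w hv g hg]
  have hcard := Set.ncard_le_ncard hsub
  have hK : (centralizer {u, v} : Set G).ncard = Nat.card (centralizer {u, v}) :=
    (Nat.card_coe_set_eq _).symm
  rw [Set.ncard_insert_of_notMem (fun h1 => h.notMem_of_mem h1 (one_mem A)), hK] at hcard
  have := four_mul_card_centralizer_pair_le huv
  omega

end IsStrictSplitDecomp

end SplitDecomp

end

theorem strict_two_split_to_three_split {G : Type*} [Group G] [Finite G]
    (A : Subgroup G) (B : Fin 2 → Set G) (h : IsStrictSplitDecomp A B)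
    (h1 : ¬ Nonempty (G ≃* Equiv.Perm (Fin 3)))
    (h2 : ¬ Nonempty (G ≃* DihedralGroup 5))
    (h3 : ¬ ((Nonempty (G ≃* DihedralGroup 4) ∨ Nonempty (G ≃* QuaternionGroup 2)) ∧
      Nat.card A = 4)) :
    ∃ B' : Fin 3 → Set G, IsStrictSplitDecomp A B' := by
  have hcard := h.card_eq
  rw [Fin.sum_univ_two] at hcard
  have hdvd : Nat.card A ∣ (B 0).ncard + (B 1).ncard :=
    (Nat.dvd_add_right dvd_rfl).mp (hcard ▸ A.card_subgroup_dvd_card)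
  by_cases hbig : ∃ i, 4 ≤ (B i).ncard
  · obtain ⟨i, hi⟩ := hbig
    exact h.exists_succ_of_four_le_ncard hi
  push Not at hbig
  have hsizes : 2 ≤ (B 0).ncard ∧ (B 0).ncard < 4 ∧ 2 ≤ (B 1).ncard ∧ (B 1).ncard < 4 :=
    ⟨h.2 0, hbig 0, h.2 1, hbig 1⟩
  by_cases h33 : (B 0).ncard = 3 ∧ (B 1).ncard = 3
  · have hA := Nat.le_of_dvd (by omega) hdvd
    obtain ⟨x, hx, y, hy, hxy⟩ := h.exists_not_commute_of_card_lt 0 1 (by omega)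
    exact h.exists_succ_of_not_commute (by decide) (by omega) (by omega) hx hy hxy
  rcases exceptional_of_card_eq_card_add A (h.not_isMulCommutative 0) hcard (by omega) (by omega)
    with hG | hG | hG
  exacts [absurd hG h1, absurd hG h2, absurd hG h3]
end

section
/- Suppose a finite group G has a strict 3-split decomposition with respect to a normal abelian subgroup A. Then: (1) every element of the quotient group G/A has order at most 4; (2) every prime dividing |G/A| is 2 or 3; (3) if 3 divides |G/A|, then the Sylow 3-subgroups of G have order exactly 3. -/
open Subgroup

theorem Subgroup.eq_zpowers_of_card_prime {G : Type*} [Group G] {H : Subgroup G} {p : ℕ}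
    [Fact p.Prime] (hH : Nat.card H = p) {g : G} (hg : g ∈ H) (hg1 : g ≠ 1) :
    H = zpowers g := by
  have := congrArg (map H.subtype)
    (zpowers_eq_top_of_prime_card hH (g := ⟨g, hg⟩) (by simpa using hg1))
  rwa [MonoidHom.map_zpowers, ← MonoidHom.range_eq_map, range_subtype, eq_comm] at this

theorem Sylow.exists_mem_notMem_of_dvd_card_quotient {G : Type*} [Group G] [Finite G]
    {A : Subgroup G} [A.Normal] {p : ℕ} [Fact p.Prime] (hp : p ∣ Nat.card (G ⧸ A))
    (P : Sylow p G) : ∃ z ∈ P, z ∉ A := by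
  by_contra! hPA
  exact P.not_dvd_index ((index_eq_card A ▸ hp).trans (index_dvd_of_le hPA))

namespace IsSplitDecomp

variable {G : Type*} [Group G] {A : Subgroup G} {n : ℕ} {B : Fin n → Set G}

theorem card_le_of_pairwise_commute (h : IsSplitDecomp A B) {ι : Type*} {f : ι → G}
    (hf : Function.Injective f) (hA : ∀ i, f i ∉ A) (hc : ∀ i j, Commute (f i) (f j)) :
    Nat.card ι ≤ n := by
  obtain ⟨-, hcover, -, -, -, hB⟩ := h
  have hpart : ∀ i, ∃ k, f i ∈ B k := fun i => by
    have : f i ∈ (A : Set G) ∪ ⋃ k, B k := hcover ▸ Set.mem_univ _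
    simpa [hA i] using this
  choose k hk using hpart
  have hk_inj : Function.Injective k := fun i j hij =>
    hf (by_contra fun hne => hB (k i) _ (hk i) _ (hij ▸ hk j) hne (hc i j))
  simpa using Nat.card_le_card_of_injective k hk_inj

theorem orderOf_quotient_le [A.Normal] (h : IsSplitDecomp A B) (x : G ⧸ A) :
    orderOf x ≤ n + 1 := by
  obtain ⟨g, rfl⟩ := QuotientGroup.mk_surjective x
  set m := orderOf (g : G ⧸ A)
  have hpow : ∀ i : Fin (m - 1),
      ((g ^ ((i : ℕ) + 1) : G) : G ⧸ A) = (g : G ⧸ A) ^ ((i : ℕ) + 1) :=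
    fun i => QuotientGroup.mk_pow A g _
  have hlt : ∀ i : Fin (m - 1), (i : ℕ) + 1 < m := fun i => by omega
  have := h.card_le_of_pairwise_commute (f := fun i : Fin (m - 1) => g ^ ((i : ℕ) + 1))
    (fun i j hij => Fin.ext (Nat.succ_injective (pow_injOn_Iio_orderOf (hlt i) (hlt j)
      (by simpa [hpow] using congrArg (QuotientGroup.mk (s := A)) hij))))
    (fun i hi => pow_ne_one_of_lt_orderOf (Nat.succ_ne_zero _) (hlt i)
      ((hpow i).symm.trans ((QuotientGroup.eq_one_iff _).mpr hi)))
    (fun i j => (Commute.refl g).pow_pow _ _)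
  simp only [Nat.card_eq_fintype_card, Fintype.card_fin] at this
  omega

theorem prime_le_of_dvd_card_quotient [Finite G] [A.Normal] (h : IsSplitDecomp A B) {p : ℕ}
    (hp : p.Prime) (hdvd : p ∣ Nat.card (G ⧸ A)) : p ≤ n + 1 := by
  have := Fact.mk hp
  obtain ⟨x, hx⟩ := exists_prime_orderOf_dvd_card' p hdvd
  exact hx ▸ h.orderOf_quotient_le x

theorem card_le_two_mul_of_isMulCommutative [Finite G] (h : IsSplitDecomp A B) {H : Subgroup G}
    [IsMulCommutative H] {z : G} (hzH : z ∈ H) (hzA : z ∉ A) : Nat.card H ≤ 2 * n := by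
  have hcomm : ∀ {x y}, x ∈ H → y ∈ H → Commute x y := fun hx hy => setLike_mul_comm hx hy
  have hout : Nat.card ↥((H : Set G) \ A) ≤ n :=
    h.card_le_of_pairwise_commute Subtype.val_injective (fun x => x.2.2)
      (fun x y => hcomm x.2.1 y.2.1)
  have hin : Nat.card ↥((H : Set G) ∩ A) ≤ n :=
    h.card_le_of_pairwise_commute (f := fun a : ↥((H : Set G) ∩ A) => z * a)
      (fun a b hab => Subtype.ext (mul_left_cancel hab))
      (fun a ha => hzA (by simpa using mul_mem ha (inv_mem a.2.2)))
      (fun a b => hcomm (mul_mem hzH a.2.1) (mul_mem hzH b.2.1))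
  rw [Nat.card_coe_set_eq] at hout hin
  calc Nat.card H = ((H : Set G) ∩ A).ncard + ((H : Set G) \ A).ncard := by
        rw [Set.ncard_inter_add_ncard_sdiff_eq_ncard, ← Nat.card_coe_set_eq]; rfl
    _ ≤ 2 * n := by omega

theorem card_eq_of_isPGroup [Finite G] (h : IsSplitDecomp A B) {p : ℕ} [Fact p.Prime]
    (hn : 2 * n < p ^ 2) {H : Subgroup G} [IsMulCommutative H] (hH : IsPGroup p H) {z : G}
    (hzH : z ∈ H) (hzA : z ∉ A) : Nat.card H = p := by
  obtain ⟨m, hm⟩ := hH.exists_card_eq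
  have hle := h.card_le_two_mul_of_isMulCommutative hzH hzA
  have hm2 : m < 2 := by
    by_contra! hm2
    have := Nat.pow_le_pow_right (Fact.out : p.Prime).pos hm2
    omega
  have hm0 : m ≠ 0 := by
    rintro rfl
    rw [pow_zero, card_eq_one] at hm
    exact hzA (mem_bot.mp (hm ▸ hzH) ▸ one_mem A)
  obtain rfl : m = 1 := by omega
  simpa using hm

theorem mem_zpowers_of_commute [Finite G] (h : IsSplitDecomp A B) {p : ℕ} [Fact p.Prime]
    (hn : 2 * n < p ^ 2) {P : Sylow p G} {z w : G} (hzP : z ∈ P) (hzA : z ∉ A) (hwP : w ∈ P)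
    (hzw : Commute z w) : w ∈ zpowers z := by
  have : IsMulCommutative (closure {z, w}) := isMulCommutative_closure (by
    rintro _ (rfl | rfl) _ (rfl | rfl) <;> first | rfl | exact hzw | exact hzw.symm)
  have hle : closure {z, w} ≤ P := (closure_le _).mpr (Set.insert_subset hzP (by simpa using hwP))
  have hzK : z ∈ closure {z, w} := subset_closure (by simp)
  have hK := h.card_eq_of_isPGroup hn (P.isPGroup'.to_le hle) hzK hzA
  have hKz := eq_zpowers_of_card_prime hK hzK (fun hz => hzA (hz ▸ one_mem A))
  exact hKz ▸ subset_closure (by simp)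

theorem card_sylow_eq [Finite G] [A.Normal] (h : IsSplitDecomp A B) {p : ℕ} [Fact p.Prime]
    (hn : 2 * n < p ^ 2) (hp : p ∣ Nat.card (G ⧸ A)) (P : Sylow p G) :
    Nat.card (P : Subgroup G) = p := by
  obtain ⟨z, hzP, hzA⟩ := P.exists_mem_notMem_of_dvd_card_quotient hp
  have hz1 : z ≠ 1 := fun hz => hzA (hz ▸ one_mem A)
  have hzp : Nat.card (zpowers z) = p :=
    h.card_eq_of_isPGroup hn (P.isPGroup'.to_le (zpowers_le.mpr hzP)) (mem_zpowers z) hzA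
  have hz_central : ∀ w ∈ P, Commute z w := by
    have : Nontrivial P := ⟨⟨⟨z, hzP⟩, 1, by simpa using hz1⟩⟩
    have := P.isPGroup'.center_nontrivial
    obtain ⟨c, hc⟩ := exists_ne (1 : center P)
    have hc_central : ∀ w ∈ P, Commute (c : G) w := fun w hw =>
      congrArg Subtype.val (mem_center_iff.mp c.2 ⟨w, hw⟩).symm
    have hzc : zpowers z = zpowers (c : G) :=
      eq_zpowers_of_card_prime hzp
        (h.mem_zpowers_of_commute hn hzP hzA (c : P).2 (hc_central z hzP).symm) (by simpa using hc)
    intro w hw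
    obtain ⟨k, hk⟩ := mem_zpowers_iff.mp (hzc ▸ mem_zpowers z)
    exact hk ▸ (hc_central w hw).zpow_left k
  have hPz : (P : Subgroup G) = zpowers z :=
    le_antisymm (fun w hw => h.mem_zpowers_of_commute hn hzP hzA hw (hz_central w hw))
      (zpowers_le.mpr hzP)
  rw [hPz, hzp]

end IsSplitDecomp

theorem strict_three_split_quotient_properties {G : Type*} [Group G] [Finite G]
    (A : Subgroup G) [A.Normal] (B : Fin 3 → Set G) (h : IsStrictSplitDecomp A B) :
    (∀ x : G ⧸ A, orderOf x ≤ 4) ∧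
    (∀ p : ℕ, p.Prime → p ∣ Nat.card (G ⧸ A) → p = 2 ∨ p = 3) ∧
    (3 ∣ Nat.card (G ⧸ A) → ∀ P : Sylow 3 G, Nat.card ↥(P : Subgroup G) = 3) := by
  have hsplit := h.1
  refine ⟨hsplit.orderOf_quotient_le, fun p hp hdvd => ?_, fun h3 P => ?_⟩
  · have := hsplit.prime_le_of_dvd_card_quotient hp hdvd
    have := hp.two_le
    interval_cases p
    · exact Or.inl rfl
    · exact Or.inr rfl
    · exact absurd hp (by decide)
  · have : Fact (Nat.Prime 3) := ⟨Nat.prime_three⟩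
    exact hsplit.card_sylow_eq (by norm_num) h3 P
end

section
/- There exists a function f from the positive integers to the positive integers such that for every finite group G, every abelian subgroup A of G, and every positive integer n, if G has an n-split decomposition with respect to A, then the index |G : A| is at most f(n). -/
open Nat Subgroup

theorem Nat.le_mul_of_add_eq_of_dvd_mul {N L t b : ℕ} (hL : 0 < L) (ht : 0 < t)
    (hN : t + b = N) (hdvd : N ∣ L * b) : N ≤ L * t := by
  have hsum : L * t + L * b = L * N := by rw [← mul_add, hN]
  have : N ∣ L * t := (Nat.dvd_add_left hdvd).mp (hsum ▸ dvd_mul_left N L)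
  exact Nat.le_of_dvd (by positivity) this

section

variable {G : Type*} [Group G]

theorem Subgroup.card_centralizer_mul_ncard_isConj (g : G) :
    Nat.card (centralizer {g}) * {h | IsConj g h}.ncard = Nat.card G := by
  have horbit : MulAction.orbit (ConjAct G) g = {h | IsConj g h} := by
    ext h
    exact ConjAct.mem_orbit_conjAct.trans isConj_comm
  rw [nat_card_centralizer_nat_card_stabilizer, ← horbit, ← MulAction.index_stabilizer]
  exact card_mul_index _

theorem Subgroup.card_centralizer_eq_of_isConj [Finite G] {g h : G} (hgh : IsConj g h) :
    Nat.card (centralizer {g}) = Nat.card (centralizer {h}) := by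
  have hcl : {k | IsConj g k} = {k | IsConj h k} := by
    ext k
    exact ⟨hgh.symm.trans, hgh.trans⟩
  have hpos : 0 < {k | IsConj g k}.ncard := (Set.ncard_pos).mpr ⟨g, IsConj.refl g⟩
  refine Nat.eq_of_mul_eq_mul_right hpos ?_
  rw [card_centralizer_mul_ncard_isConj, hcl, card_centralizer_mul_ncard_isConj]

theorem card_dvd_mul_ncard_of_isConj_closed [Finite G] {L : ℕ} {X : Set G}
    (hX : ∀ x ∈ X, ∀ y, IsConj x y → y ∈ X) (hL : ∀ x ∈ X, Nat.card (centralizer {x}) ∣ L) :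
    Nat.card G ∣ L * X.ncard := by
  classical
  have := Fintype.ofFinite G
  rw [Set.ncard_eq_toFinset_card', Finset.card_eq_sum_card_image ConjClasses.mk, Finset.mul_sum]
  refine Finset.dvd_sum fun c hc => ?_
  obtain ⟨x, hx, rfl⟩ := Finset.mem_image.mp hc
  rw [Set.mem_toFinset] at hx
  have hclass : X.toFinset.filter (fun y => ConjClasses.mk y = ConjClasses.mk x) =
      {y | IsConj x y}.toFinset := by
    ext y
    simp only [Finset.mem_filter, Set.mem_toFinset, ConjClasses.mk_eq_mk_iff_isConj,
      Set.mem_ofPred_eq, isConj_comm (g := y)]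
    exact ⟨And.right, fun hxy => ⟨hX x hx y hxy, hxy⟩⟩
  obtain ⟨k, rfl⟩ := hL x hx
  rw [hclass, ← Set.ncard_eq_toFinset_card', ← card_centralizer_mul_ncard_isConj x]
  exact ⟨k, by ring⟩

theorem card_le_factorial_mul_ncard_of_card_centralizer_le [Finite G] {S : Set G} (hS : 1 ∈ S)
    {c : ℕ} (hc : ∀ u ∉ S, Nat.card (centralizer {u}) ≤ c) : Nat.card G ≤ c ! * S.ncard := by
  set T : Set G := {g | ∀ h, IsConj g h → h ∈ S}
  have hTS : T ⊆ S := fun g hg => hg g (IsConj.refl g)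
  have hT1 : 1 ∈ T := fun h h1 => (isConj_one_right.mp h1) ▸ hS
  have hTc : ∀ x ∈ Tᶜ, ∀ y, IsConj x y → y ∈ Tᶜ := fun x hx y hxy hy =>
    hx fun h hxh => hy h (hxy.symm.trans hxh)
  have hcent : ∀ x ∈ Tᶜ, Nat.card (centralizer {x}) ∣ c ! := by
    intro x hx
    simp only [T, Set.mem_compl_iff, Set.mem_ofPred_eq, not_forall] at hx
    obtain ⟨h, hxh, hh⟩ := hx
    rw [card_centralizer_eq_of_isConj hxh]
    exact Nat.dvd_factorial Nat.card_pos (hc h hh)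
  calc Nat.card G ≤ c ! * T.ncard :=
        Nat.le_mul_of_add_eq_of_dvd_mul (factorial_pos c) ((Set.ncard_pos).mpr ⟨1, hT1⟩)
          (Set.ncard_add_ncard_compl T) (card_dvd_mul_ncard_of_isConj_closed hTc hcent)
    _ ≤ c ! * S.ncard := Nat.mul_le_mul_left _ (Set.ncard_le_ncard hTS)

theorem Subgroup.index_le_factorial_of_card_centralizer_le [Finite G] (A : Subgroup G) {c : ℕ}
    (hc : ∀ u ∉ A, Nat.card (centralizer {u}) ≤ c) : A.index ≤ c ! := by
  have hG := card_le_factorial_mul_ncard_of_card_centralizer_le A.one_mem hc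
  rw [← card_mul_index A, ← Nat.card_coe_set_eq, mul_comm] at hG
  exact Nat.le_of_mul_le_mul_right hG Nat.card_pos

theorem Subgroup.card_le_two_mul_ncard_diff [Finite G] {H K : Subgroup G}
    (hHK : ¬H ≤ K) : Nat.card H ≤ 2 * ((H : Set G) \ K).ncard := by
  obtain ⟨u, huH, huK⟩ := SetLike.not_le_iff_exists.mp hHK
  have hinter : ((H : Set G) ∩ K).ncard ≤ ((H : Set G) \ K).ncard := by
    refine Set.ncard_le_ncard_of_injOn (· * u) ?_ (mul_left_injective u).injOn
    rintro t ⟨htH, htK⟩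
    exact ⟨mul_mem htH huH, fun htuK => huK (by simpa using mul_mem (inv_mem htK) htuK)⟩
  have hH : Nat.card H = (H : Set G).ncard := Nat.card_coe_set_eq _
  have hsplit := Set.ncard_inter_add_ncard_sdiff_eq_ncard (H : Set G) (K : Set G)
  omega

end

def IsNoncommutingCover {G : Type*} [Group G] (A : Subgroup G) {n : ℕ} (B : Fin n → Set G) :
    Prop :=
  (∀ x ∉ A, ∃ i, x ∈ B i) ∧ ∀ i, (B i).Pairwise fun x y => ¬Commute x y

namespace IsNoncommutingCover

variable {G : Type*} [Group G] {A : Subgroup G} {n : ℕ} {B : Fin n → Set G}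

theorem ncard_le (hB : IsNoncommutingCover A B) {S : Set G} (hSA : ∀ x ∈ S, x ∉ A)
    (hS : S.Pairwise Commute) : S.ncard ≤ n := by
  choose i hi using fun x : S => hB.1 x (hSA x x.2)
  have hinj : Function.Injective i := fun x y hxy => by
    by_contra hne
    have hne' : (x : G) ≠ y := Subtype.coe_ne_coe.mpr hne
    exact hB.2 (i x) (hi x) (hxy ▸ hi y) hne' (hS x.2 y.2 hne')
  simpa [Nat.card_coe_set_eq] using Nat.card_le_card_of_injective i hinj

theorem exists_centralizer_cover [Finite G] [IsMulCommutative A] {B : Fin (n + 1) → Set G}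
    (hB : IsNoncommutingCover A B) {u : G} (hu : u ∉ A) :
    ∃ (H : Subgroup (centralizer {u})) (B' : Fin n → Set (centralizer {u})),
      IsMulCommutative H ∧ Nat.card H ≤ 2 * (n + 1) ∧ IsNoncommutingCover H B' := by
  obtain ⟨i₀, hui₀⟩ := hB.1 u hu
  set K : Set G := insert u ((A : Set G) ∩ centralizer {u})
  have hKC : K ⊆ centralizer {u} :=
    Set.insert_subset (mem_centralizer_singleton_iff.mpr rfl) Set.inter_subset_right
  have hKcomm : ∀ x ∈ K, ∀ y ∈ K, x * y = y * x := by
    rintro x (rfl | ⟨hxA, hxu⟩) y (rfl | ⟨hyA, hyu⟩)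
    · rfl
    · exact (mem_centralizer_singleton_iff.mp hyu).symm
    · exact mem_centralizer_singleton_iff.mp hxu
    · exact setLike_mul_comm hxA hyA
  set H := closure K
  have : IsMulCommutative H := isMulCommutative_closure hKcomm
  have huH : u ∈ H := subset_closure (Set.mem_insert u _)
  have hHC : H ≤ centralizer {u} := (closure_le _).mpr hKC
  refine ⟨H.subgroupOf (centralizer {u}), fun j => (↑) ⁻¹' B (i₀.succAbove j), inferInstance,
    ?_, ⟨fun v hv => ?_, fun j x hx y hy hne hxy => ?_⟩⟩
  · have hdiff : ((H : Set G) \ A).ncard ≤ n + 1 :=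
      hB.ncard_le (fun x hx => hx.2) fun x hx y hy _ => setLike_mul_comm hx.1 hy.1
    calc Nat.card (H.subgroupOf (centralizer {u})) = Nat.card H :=
          Nat.card_congr (subgroupOfEquivOfLe hHC).toEquiv
      _ ≤ 2 * ((H : Set G) \ A).ncard :=
          card_le_two_mul_ncard_diff fun hHA => hu (hHA huH)
      _ ≤ 2 * (n + 1) := by omega
  · rw [mem_subgroupOf] at hv
    have hvA : (v : G) ∉ A := fun hvA => hv (subset_closure (Set.mem_insert_of_mem u ⟨hvA, v.2⟩))
    obtain ⟨i, hvi⟩ := hB.1 v hvA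
    have hi : i ≠ i₀ := by
      rintro rfl
      have hvu : (v : G) ≠ u := fun h => hv (h.symm ▸ huH)
      exact hB.2 i hvi hui₀ hvu (mem_centralizer_singleton_iff.mp v.2)
    obtain ⟨j, rfl⟩ := Fin.exists_succAbove_eq hi
    exact ⟨j, hvi⟩
  · exact hB.2 _ hx hy (Subtype.coe_ne_coe.mpr hne) (Submonoid.commute_coe_coe.mpr hxy)

end IsNoncommutingCover

def centralizerBound : ℕ → ℕ
  | 0 => 0
  | n + 1 => 2 * (n + 1) * (centralizerBound n)!

theorem IsNoncommutingCover.index_le_factorial_centralizerBound :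
    ∀ (n : ℕ) {G : Type*} [Group G] [Finite G] {A : Subgroup G} [IsMulCommutative A]
      {B : Fin n → Set G}, IsNoncommutingCover A B → A.index ≤ (centralizerBound n)!
  | 0, _, _, _, A, _, _, hB =>
    A.index_le_factorial_of_card_centralizer_le fun u hu => (hB.1 u hu).elim fun i _ => i.elim0
  | n + 1, _, _, _, A, _, _, hB => A.index_le_factorial_of_card_centralizer_le fun u hu => by
    obtain ⟨H, B', hH, hHcard, hB'⟩ := hB.exists_centralizer_cover hu
    calc Nat.card (centralizer {u}) = Nat.card H * H.index := (card_mul_index H).symm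
      _ ≤ 2 * (n + 1) * (centralizerBound n)! :=
          Nat.mul_le_mul hHcard (index_le_factorial_centralizerBound n hB')

theorem index_bounded_by_function_of_n :
    ∃ f : ℕ → ℕ, (∀ n, 0 < f n) ∧
      ∀ (G : Type) [Group G] [Finite G] (A : Subgroup G) (n : ℕ), 0 < n →
        (∃ B : Fin n → Set G, IsSplitDecomp A B) → A.index ≤ f n := by
  refine ⟨fun n => (centralizerBound n)!, fun n => factorial_pos _, ?_⟩
  rintro G _ _ A n - ⟨B, hAcomm, hcover, -, -, -, hB⟩
  have hcov : ∀ x ∉ A, ∃ i, x ∈ B i := fun x hx => by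
    have hx' : x ∈ (A : Set G) ∪ ⋃ i, B i := by rw [hcover]; trivial
    simpa [hx] using hx'
  exact IsNoncommutingCover.index_le_factorial_centralizerBound n ⟨hcov, hB⟩
end
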